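/- arXiv:1911.03577 — 8 statements merged into one kernel-verified Lean document; each statement's English description precedes it below -/
import Mathlib

section
/- Let Γ be a real n × P matrix and let D be a symmetric positive semidefinite P × P matrix such that M := ΓᵀΓ + D is invertible. Then 0 ≤ tr(Γ M^{-1} Γᵀ) ≤ rank(Γ) ≤ P. (This is the matrix content of the paper's Corollary: the degrees of freedom div μ̂(ȳ) = tr(Γ M^{-1} Γᵀ) of the Blasso, where D = blockdiag(0_{k×k}, diag(Q_1,…,Q_k)) is the curvature matrix and P = (d+1)k, is sandwiched between 0 and the rank of Γ, hence at most the number (d+1)k of recovered parameters.) -/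
/-!
With `M = Γᵀ Γ + D`, the hat matrix `H = Γ M⁻¹ Γᵀ` is symmetric and satisfies
`H - H² = (Γ M⁻¹) D (Γ M⁻¹)ᵀ ⪰ 0`. Hence every eigenvalue `λ` of `H` has `λ - λ² ≥ 0`, i.e.
`λ ∈ [0, 1]`, so `tr H = ∑ λ` lies between `0` and the number of nonzero eigenvalues, which is
`rank H ≤ rank Γ`.
-/

open Matrix
open scoped ComplexOrder

theorem Finset.sum_le_card_filter_ne_zero {ι : Type*} (s : Finset ι) {f : ι → ℝ}
    (hf : ∀ i ∈ s, f i ≤ 1) : ∑ i ∈ s, f i ≤ (s.filter fun i ↦ f i ≠ 0).card := by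
  rw [← Finset.sum_filter_ne_zero]
  simpa using Finset.sum_le_card_nsmul _ f 1 fun i hi ↦ hf i (Finset.mem_filter.mp hi).1

namespace Matrix

lemma mul_inv_mul_conjTranspose_sub_mul_self {m p R : Type*} [Fintype m] [Fintype p] [DecidableEq p]
    [CommRing R] [StarRing R] {Γ : Matrix m p R} {D M : Matrix p p R}
    (hD : D.IsHermitian) (hM : M = Γᴴ * Γ + D) (hMinv : IsUnit M.det) :
    Γ * M⁻¹ * Γᴴ - Γ * M⁻¹ * Γᴴ * (Γ * M⁻¹ * Γᴴ) = Γ * M⁻¹ * D * (Γ * M⁻¹)ᴴ := by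
  have hMinvH : M⁻¹ᴴ = M⁻¹ := (hM ▸ (isHermitian_conjTranspose_mul_self Γ).add hD).inv
  have hD' : D = M - Γᴴ * Γ := by rw [hM, add_sub_cancel_left]
  rw [conjTranspose_mul, hMinvH, hD']
  simp only [Matrix.mul_sub, Matrix.sub_mul, Matrix.mul_assoc,
    nonsing_inv_mul_cancel_left _ _ hMinv]

namespace IsHermitian

variable {n 𝕜 : Type*} [Fintype n] [DecidableEq n] [RCLike 𝕜] {H : Matrix n n 𝕜}

lemma eigenvalues_mem_Icc_of_posSemidef_sub_mul_self (hH : H.IsHermitian)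
    (h : (H - H * H).PosSemidef) (i : n) : hH.eigenvalues i ∈ Set.Icc 0 1 := by
  set v : n → 𝕜 := ⇑(hH.eigenvectorBasis i)
  set μ := hH.eigenvalues i
  have hv : star v ⬝ᵥ v = 1 := by
    simp [v, dotProduct_comm, ← EuclideanSpace.inner_eq_star_dotProduct,
      hH.eigenvectorBasis.orthonormal.1 i]
  have hquad : 0 ≤ μ - μ * μ := by
    have := h.dotProduct_mulVec_nonneg v
    rwa [sub_mulVec, ← mulVec_mulVec, hH.mulVec_eigenvectorBasis, mulVec_smul,
      hH.mulVec_eigenvectorBasis, smul_smul, ← sub_smul, dotProduct_smul, hv,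
      RCLike.real_smul_eq_coe_mul, mul_one, RCLike.ofReal_nonneg] at this
  constructor <;> nlinarith

lemma trace_nonneg_of_posSemidef_sub_mul_self (hH : H.IsHermitian)
    (h : (H - H * H).PosSemidef) : 0 ≤ H.trace := by
  rw [hH.trace_eq_sum_eigenvalues, ← RCLike.ofReal_sum, RCLike.ofReal_nonneg]
  exact Finset.sum_nonneg fun i _ ↦ (hH.eigenvalues_mem_Icc_of_posSemidef_sub_mul_self h i).1

lemma trace_le_rank_of_posSemidef_sub_mul_self (hH : H.IsHermitian)
    (h : (H - H * H).PosSemidef) : H.trace ≤ H.rank := by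
  rw [hH.trace_eq_sum_eigenvalues, ← RCLike.ofReal_sum, ← RCLike.ofReal_natCast,
    RCLike.ofReal_le_ofReal, hH.rank_eq_card_non_zero_eigs, Fintype.card_subtype]
  exact Finset.sum_le_card_filter_ne_zero _ fun i _ ↦
    (hH.eigenvalues_mem_Icc_of_posSemidef_sub_mul_self h i).2

end IsHermitian

end Matrix

/-- Let `Γ` be a real `n × P` matrix and `D` a symmetric positive
semidefinite `P × P` matrix such that `M = Γᵀ Γ + D` is invertible. Then
`0 ≤ tr (Γ M⁻¹ Γᵀ) ≤ rank Γ ≤ P`. -/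
theorem blasso_dof_trace_bounds {n P : ℕ}
    (Γ : Matrix (Fin n) (Fin P) ℝ)
    (D : Matrix (Fin P) (Fin P) ℝ) (hD : D.PosSemidef)
    (M : Matrix (Fin P) (Fin P) ℝ) (hM : M = Γᵀ * Γ + D)
    (hMinv : IsUnit M.det) :
    0 ≤ (Γ * M⁻¹ * Γᵀ).trace ∧
      (Γ * M⁻¹ * Γᵀ).trace ≤ (Γ.rank : ℝ) ∧
      Γ.rank ≤ P := by
  rw [← conjTranspose_eq_transpose_of_trivial] at hM ⊢
  have hM' : M.IsHermitian := hM ▸ (isHermitian_conjTranspose_mul_self Γ).add hD.1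
  have hH : (Γ * M⁻¹ * Γᴴ).IsHermitian := isHermitian_mul_mul_conjTranspose Γ hM'.inv
  have hHH : (Γ * M⁻¹ * Γᴴ - Γ * M⁻¹ * Γᴴ * (Γ * M⁻¹ * Γᴴ)).PosSemidef := by
    rw [mul_inv_mul_conjTranspose_sub_mul_self hD.1 hM hMinv]
    exact hD.mul_mul_conjTranspose_same _
  have hrank : (Γ * M⁻¹ * Γᴴ).rank ≤ Γ.rank :=
    (rank_mul_le_left _ _).trans (rank_mul_le_left _ _)
  refine ⟨hH.trace_nonneg_of_posSemidef_sub_mul_self hHH, ?_, rank_le_width Γ⟩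
  exact (hH.trace_le_rank_of_posSemidef_sub_mul_self hHH).trans (by exact_mod_cast hrank)
end

section
/- Let k ≥ 1 and d ≥ 1, set P := (d+1)k, let Γ be a real n × P matrix with trivial kernel (so rank(Γ) = P), let Q be a symmetric positive definite kd × kd matrix, set D := blockdiag(0_{k×k}, Q), and assume M := ΓᵀΓ + D is invertible. Then tr(Γ M^{-1} Γᵀ) < P. (This is the strict part of the paper's Corollary: when Γ_{X̄} is injective and the Hessians ∇²η_ȳ(x̄_j) are invertible, the degrees of freedom of the Blasso is strictly smaller than the number P = (d+1)k of recovered parameters.) -/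
/-!
Since `ΓᵀΓ = M - D`, cyclicity of the trace gives `tr (Γ M⁻¹ Γᵀ) = tr (M⁻¹ (M - D)) = P - tr (M⁻¹ D)`.
As `Γ` is injective and `D` is positive semidefinite, `M` and hence `M⁻¹` are positive definite,
while `D ≠ 0` because `Q` is positive definite of size `kd ≥ 1`. The trace of the product of a
positive definite and a nonzero positive semidefinite matrix is positive, so `tr (M⁻¹ D) > 0`.
-/

open Matrix

namespace Matrix

open scoped ComplexOrder MatrixOrder

variable {n 𝕜 : Type*} [Fintype n] [RCLike 𝕜]

theorem PosSemidef.trace_pos {A : Matrix n n 𝕜} (hA : A.PosSemidef) (hA0 : A ≠ 0) :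
    0 < A.trace :=
  hA.trace_nonneg.lt_of_ne fun h ↦ hA0 (hA.trace_eq_zero_iff.mp h.symm)

/-- Writing `A = T * T` with `T = √A` invertible, `tr (A B) = tr (Tᴴ B T)` is the trace of a
nonzero positive semidefinite matrix. -/
theorem PosDef.trace_mul_pos [DecidableEq n] {A B : Matrix n n 𝕜} (hA : A.PosDef)
    (hB : B.PosSemidef) (hB0 : B ≠ 0) : 0 < (A * B).trace := by
  set T := CFC.sqrt A
  have hTT : T * T = A := CFC.sqrt_mul_sqrt_self A hA.posSemidef.nonneg
  have hT : Tᴴ = T := (CFC.sqrt_nonneg A).posSemidef.isHermitian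
  have hTunit : IsUnit T := isUnit_of_mul_isUnit_left (hTT ▸ hA.isUnit)
  have htrace : (A * B).trace = (Tᴴ * B * T).trace := by
    rw [hT, ← hTT, Matrix.mul_assoc, trace_mul_comm, Matrix.mul_assoc]
  rw [htrace]
  refine (hB.conjTranspose_mul_mul_same T).trace_pos fun h ↦ hB0 ?_
  rwa [hTunit.mul_left_eq_zero, hT, hTunit.mul_right_eq_zero] at h

theorem PosSemidef.fromBlocks_zero₁₁ {m R : Type*} [Fintype m] [DecidableEq n] [Field R]
    [PartialOrder R] [StarRing R] [StarOrderedRing R] {D : Matrix n n R} (hD : D.PosDef) :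
    (fromBlocks (0 : Matrix m m R) 0 0 D).PosSemidef := by
  have := hD.isUnit.invertible
  simpa using (PosDef.fromBlocks₂₂ (0 : Matrix m m R) 0 hD).mpr (by simpa using PosSemidef.zero)

theorem trace_mul_inv_add_mul_transpose {m p R : Type*} [Fintype m] [Fintype p] [DecidableEq p]
    [CommRing R] (Γ : Matrix m p R) (D : Matrix p p R) (h : IsUnit (Γᵀ * Γ + D).det) :
    (Γ * (Γᵀ * Γ + D)⁻¹ * Γᵀ).trace = Fintype.card p - ((Γᵀ * Γ + D)⁻¹ * D).trace :=
  calc (Γ * (Γᵀ * Γ + D)⁻¹ * Γᵀ).trace = ((Γᵀ * Γ + D)⁻¹ * (Γᵀ * Γ + D - D)).trace := by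
        rw [Matrix.mul_assoc, trace_mul_comm, Matrix.mul_assoc, add_sub_cancel_right]
    _ = Fintype.card p - ((Γᵀ * Γ + D)⁻¹ * D).trace := by
        rw [Matrix.mul_sub, nonsing_inv_mul _ h, trace_sub, trace_one]

end Matrix

theorem blasso_dof_strictly_less_than_params_general {n k d : ℕ} (hk : 1 ≤ k) (hd : 1 ≤ d)
    (Γ : Matrix (Fin n) (Fin k ⊕ Fin (k * d)) ℝ)
    (hΓ : ∀ v : Fin k ⊕ Fin (k * d) → ℝ, Γ.mulVec v = 0 → v = 0)
    (Q : Matrix (Fin (k * d)) (Fin (k * d)) ℝ) (hQ : Q.PosDef)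
    (M : Matrix (Fin k ⊕ Fin (k * d)) (Fin k ⊕ Fin (k * d)) ℝ)
    (hM : M = Γᵀ * Γ + Matrix.fromBlocks 0 0 0 Q) :
    (Γ * M⁻¹ * Γᵀ).trace < ((d + 1) * k : ℝ) := by
  subst hM
  set D := fromBlocks (0 : Matrix (Fin k) (Fin k) ℝ) 0 0 Q
  have : Nonempty (Fin (k * d)) := ⟨⟨0, Nat.mul_pos hk hd⟩⟩
  have hD : D.PosSemidef := PosSemidef.fromBlocks_zero₁₁ hQ
  have hD0 : D ≠ 0 := fun h ↦
    hQ.trace_pos.ne' (by simp [(fromBlocks_inj.mp (h.trans fromBlocks_zero.symm)).2.2.2])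
  have hΓΓ : (Γᵀ * Γ).PosDef := by
    simpa [conjTranspose_eq_transpose_of_trivial] using
      PosDef.conjTranspose_mul_self Γ (LinearMap.ker_eq_bot.mp (ker_mulVecLin_eq_bot_iff.mpr hΓ))
  have hM : (Γᵀ * Γ + D).PosDef := hΓΓ.add_posSemidef hD
  rw [trace_mul_inv_add_mul_transpose Γ D ((isUnit_iff_isUnit_det _).mp hM.isUnit)]
  have hpos := hM.inv.trace_mul_pos hD hD0
  simp only [Fintype.card_sum, Fintype.card_fin]
  push_cast
  linarith

/-- Let `k ≥ 1`, `d ≥ 1`, `P = (d+1)k`, let `Γ` be a real `n × P` matrix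
with trivial kernel, `Q` a symmetric positive definite `kd × kd` matrix,
`D = blockdiag(0_{k×k}, Q)`, and assume `M = Γᵀ Γ + D` is invertible.
Then `tr (Γ M⁻¹ Γᵀ) < P = (d+1)k`. -/
theorem blasso_dof_strictly_less_than_params {n k d : ℕ} (hk : 1 ≤ k) (hd : 1 ≤ d)
    (Γ : Matrix (Fin n) (Fin k ⊕ Fin (k * d)) ℝ)
    (hΓ : ∀ v : Fin k ⊕ Fin (k * d) → ℝ, Γ.mulVec v = 0 → v = 0)
    (Q : Matrix (Fin (k * d)) (Fin (k * d)) ℝ) (hQ : Q.PosDef)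
    (M : Matrix (Fin k ⊕ Fin (k * d)) (Fin k ⊕ Fin (k * d)) ℝ)
    (hM : M = Γᵀ * Γ + Matrix.fromBlocks 0 0 0 Q)
    (hMinv : IsUnit M.det) :
    (Γ * M⁻¹ * Γᵀ).trace < ((d + 1) * k : ℝ) :=
  blasso_dof_strictly_less_than_params_general hk hd Γ hΓ Q hQ M hM
end

section
/- Let X ∈ ℝ^{n×p}, y ∈ ℝ^n, λ > 0, and suppose β̂ ∈ ℝ^p minimizes G(β) := (1/2)‖Xβ − y‖₂² + λ‖β‖₁ over ℝ^p. Then there exists a minimizer β' of G with supp(β') ⊆ supp(β̂) such that the columns of X indexed by supp(β') are linearly independent. (This is the finite-support form of the paper's Lemma 4.1: when the extended support of the Blasso is discrete, there exists a Blasso solution supported on a subset A of the extended support such that Φ_A is injective.) -/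
/-!
If the columns of `X` on the support of a minimizer `β` are dependent, pick `c ≠ 0` in the
kernel of `X` supported there. Along `β + t • c` the fit term is constant, and as long as no
coordinate changes sign the `ℓ¹` term is affine in `t`; since this affine function is minimal
at `t = 0`, it is constant up to the first `t` at which a coordinate of `β + t • c` vanishes.
That point is a minimizer with strictly smaller support, so a minimizer whose support is
minimal among those inside `supp β̂` has independent columns.
-/

open Matrix Function

lemma abs_add_mul_of_abs_mul_le {b c t : ℝ} (h : |t * c| ≤ |b|) :
    |b + t * c| = |b| + t * (SignType.sign b * c) := by
  rcases lt_trichotomy b 0 with hb | rfl | hb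
  · rw [abs_of_neg hb] at h ⊢
    rw [abs_of_nonpos (by linarith [le_abs_self (t * c)]), sign_neg hb, SignType.coe_neg_one]
    ring
  · have htc : t * c = 0 := abs_nonpos_iff.mp (by simpa using h)
    simp [htc]
  · rw [abs_of_pos hb] at h ⊢
    rw [abs_of_nonneg (by linarith [neg_abs_le (t * c)]), sign_pos hb, SignType.coe_one]
    ring

section

variable {ι : Type*} [Fintype ι]

lemma sum_abs_add_smul_of_abs_mul_le {β c : ι → ℝ} {t : ℝ} (h : ∀ j, |t * c j| ≤ |β j|) :
    ∑ j, |(β + t • c) j| = ∑ j, |β j| + t * ∑ j, SignType.sign (β j) * c j := by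
  simp only [Pi.add_apply, Pi.smul_apply, smul_eq_mul, abs_add_mul_of_abs_mul_le (h _),
    Finset.sum_add_distrib, Finset.mul_sum]

/-- Take `t = -β j / c j` for `j` minimizing `|β j| / |c j|` over `c j ≠ 0`. -/
lemma exists_abs_mul_le_and_add_mul_eq_zero {β c : ι → ℝ} (hc : c ≠ 0) :
    ∃ t : ℝ, (∀ j, |t * c j| ≤ |β j|) ∧ ∃ j, c j ≠ 0 ∧ β j + t * c j = 0 := by
  classical
  obtain ⟨j₀, hj₀⟩ := Function.ne_iff.mp hc
  obtain ⟨j₁, hj₁, hmin⟩ := (Finset.univ.filter (c · ≠ 0)).exists_min_image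
    (fun j => |β j| / |c j|) ⟨j₀, by simpa using hj₀⟩
  have hc₁ : c j₁ ≠ 0 := (Finset.mem_filter.mp hj₁).2
  refine ⟨-β j₁ / c j₁, fun j => ?_, j₁, hc₁, by field_simp; ring⟩
  by_cases hcj : c j = 0
  · simp [hcj]
  calc |-β j₁ / c j₁ * c j| = |β j₁| / |c j₁| * |c j| := by rw [abs_mul, abs_div, abs_neg]
    _ ≤ |β j| / |c j| * |c j| :=
      mul_le_mul_of_nonneg_right (hmin j (by simpa using hcj)) (abs_nonneg _)
    _ = |β j| := div_mul_cancel₀ _ (abs_ne_zero.mpr hcj)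

lemma exists_mulVec_eq_zero_of_not_linearIndepOn {m : Type*} (X : Matrix m ι ℝ) {s : Set ι}
    (h : ¬LinearIndepOn ℝ X.col s) : ∃ c : ι → ℝ, X *ᵥ c = 0 ∧ c ≠ 0 ∧ support c ⊆ s := by
  simp only [linearIndepOn_iff, not_forall] at h
  obtain ⟨l, hls, hl, hl0⟩ := h
  refine ⟨l, ?_, fun h0 => hl0 (DFunLike.coe_injective h0), ?_⟩
  · rw [← hl]
    ext i
    simp [Finsupp.linearCombination_apply, Finsupp.sum_fintype, mulVec, dotProduct, mul_comm]
  · rw [Finsupp.fun_support_eq]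
    exact (Finsupp.mem_supported ℝ l).mp hls

variable {m : Type*} (X : Matrix m ι ℝ) (F : (m → ℝ) → ℝ) (lam : ℝ)

/-- The Lasso objective is the case `F v = ½ ‖v - y‖²`. -/
def l1Penalized (β : ι → ℝ) : ℝ :=
  F (X *ᵥ β) + lam * ∑ j, |β j|

lemma l1Penalized_add_smul {β c : ι → ℝ} {t : ℝ} (hXc : X *ᵥ c = 0)
    (h : ∀ j, |t * c j| ≤ |β j|) :
    l1Penalized X F lam (β + t • c) =
      l1Penalized X F lam β + t * (lam * ∑ j, SignType.sign (β j) * c j) := by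
  simp only [l1Penalized, mulVec_add, mulVec_smul, hXc, smul_zero, add_zero,
    sum_abs_add_smul_of_abs_mul_le h]
  ring

lemma exists_minimizer_support_ssubset {β c : ι → ℝ}
    (hβ : ∀ γ, l1Penalized X F lam β ≤ l1Penalized X F lam γ)
    (hXc : X *ᵥ c = 0) (hc : c ≠ 0) (hcβ : support c ⊆ support β) :
    ∃ β', (∀ γ, l1Penalized X F lam β' ≤ l1Penalized X F lam γ) ∧ support β' ⊂ support β := by
  obtain ⟨t, ht, j, hcj, hj⟩ := exists_abs_mul_le_and_add_mul_eq_zero (β := β) hc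
  have ht' : ∀ j, |-t * c j| ≤ |β j| := by simpa only [neg_mul, abs_neg] using ht
  have hforward := hβ (β + t • c)
  have hbackward := hβ (β + (-t) • c)
  rw [l1Penalized_add_smul X F lam hXc ht] at hforward
  rw [l1Penalized_add_smul X F lam hXc ht'] at hbackward
  have hsupp : support (β + t • c) ⊆ support β := fun k hk hβk => hk <| by
    simp [hβk, notMem_support.mp fun hck => hcβ hck hβk]
  refine ⟨β + t • c, fun γ => ?_, (Set.ssubset_iff_of_subset hsupp).mpr ⟨j, hcβ hcj, ?_⟩⟩
  · rw [l1Penalized_add_smul X F lam hXc ht]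
    linarith [hβ γ]
  · simpa using hj

end

theorem lasso_solution_with_independent_columns_general {n p : ℕ}
    (X : Matrix (Fin n) (Fin p) ℝ) (y : Fin n → ℝ) (lam : ℝ)
    (G : (Fin p → ℝ) → ℝ)
    (hG : G = fun β => (1 / 2) * ∑ i, (X.mulVec β i - y i) ^ 2 + lam * ∑ j, |β j|)
    (βhat : Fin p → ℝ) (hmin : ∀ γ, G βhat ≤ G γ) :
    ∃ β' : Fin p → ℝ, (∀ γ, G β' ≤ G γ) ∧ (∀ j, β' j ≠ 0 → βhat j ≠ 0) ∧
      LinearIndependent ℝ (fun j : {j : Fin p // β' j ≠ 0} => fun i => X i j.1) := by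
  have hG' : G = l1Penalized X (fun v => (1 / 2) * ∑ i, (v i - y i) ^ 2) lam := hG
  subst hG'
  obtain ⟨β', ⟨hβ', hβ'βhat⟩, hminimal⟩ :=
    (InvImage.wf support wellFounded_lt).has_min
      {β | (∀ γ, l1Penalized X _ lam β ≤ l1Penalized X _ lam γ) ∧ support β ⊆ support βhat}
      ⟨βhat, hmin, subset_rfl⟩
  refine ⟨β', hβ', fun j => @hβ'βhat j, ?_⟩
  by_contra hdep
  obtain ⟨c, hXc, hc, hcβ'⟩ := exists_mulVec_eq_zero_of_not_linearIndepOn X hdep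
  obtain ⟨β'', hβ'', hssubset⟩ := exists_minimizer_support_ssubset X _ lam hβ' hXc hc hcβ'
  exact hminimal β'' ⟨hβ'', hssubset.subset.trans hβ'βhat⟩ hssubset

/-- If `β̂` minimizes the Lasso functional
`G(β) = (1/2)‖Xβ − y‖₂² + λ‖β‖₁`, then there exists a minimizer `β'` of `G` with
`supp β' ⊆ supp β̂` such that the columns of `X` indexed by `supp β'` are linearly
independent. -/
theorem lasso_solution_with_independent_columns {n p : ℕ}
    (X : Matrix (Fin n) (Fin p) ℝ) (y : Fin n → ℝ) (lam : ℝ) (hlam : 0 < lam)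
    (G : (Fin p → ℝ) → ℝ)
    (hG : G = fun β => (1 / 2) * ∑ i, (X.mulVec β i - y i) ^ 2 + lam * ∑ j, |β j|)
    (βhat : Fin p → ℝ) (hmin : ∀ γ, G βhat ≤ G γ) :
    ∃ β' : Fin p → ℝ, (∀ γ, G β' ≤ G γ) ∧ (∀ j, β' j ≠ 0 → βhat j ≠ 0) ∧
      LinearIndependent ℝ (fun j : {j : Fin p // β' j ≠ 0} => fun i => X i j.1) :=
  lasso_solution_with_independent_columns_general X y lam G hG βhat hmin
end

section
/- Let Ω ⊆ ℝ^d be open, φ : Ω → ℝ^n twice continuously differentiable, λ > 0, k ∈ ℕ, s ∈ {−1, +1}^k, and define F : ℝ^k × Ω^k × ℝ^n → ℝ^{k(d+1)} by F(β, X, y) := Γ_Xᵀ(Φ_X β − y) + λ(s, 0_{kd}). Suppose (β̄, X̄, ȳ) satisfies F(β̄, X̄, ȳ) = 0, the matrix Φ_{X̄} is injective, β̄_j ≠ 0 for every j, and for each j the d×d matrix (1/β̄_j) Z_j is positive definite, where Z_j := Σ_{i=1}^n (Φ_{X̄} β̄ − ȳ)_i ∇²φ_i(x̄_j). Then there exist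 open neighbourhoods U of ȳ and V of (β̄, X̄) and a continuously differentiable map g : U → V such that g(ȳ) = (β̄, X̄), F(g(y), y) = 0 for every y ∈ U, and for each y ∈ U, g(y) is the unique point (β, X) ∈ V with F(β, X, y) = 0. (This is the C¹ solution-path construction in the proof of Theorem 4.2.) -/
/-!
Since `φ` is `C²`, the map `F` is `C¹` near `(β̄, X̄, ȳ)`, and the implicit function theorem
applies as soon as the partial derivative `D_{(β,X)}F`, a square matrix of size `k(d+1)`, is
injective. Let `D_{(β,X)}F (δβ, δX) = 0` and let `δr` be the corresponding derivative of the
residual `Φ_X β − y`. Pairing the equation with `(δβ, β ⊙ δX)` and using the stationarity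
`(Φ^{(1)}_{X̄})ᵀ (Φ_{X̄} β̄ − ȳ) = 0` gives `‖δr‖² + Σ_j β̄_j δX_jᵀ Z_j δX_j = 0`. Each
`β̄_j δX_jᵀ Z_j δX_j = β̄_j² δX_jᵀ (Z_j / β̄_j) δX_j` is nonnegative and vanishes only if
`δX_j = 0`, so `δX = 0`, then `δr = Φ_{X̄} δβ = 0`, and `δβ = 0` by injectivity of `Φ_{X̄}`.
-/

open Matrix Topology Filter
open scoped ContDiff

theorem ContinuousLinearMap.isInvertible_of_injective {𝕜 E F : Type*} [RCLike 𝕜]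
    [NormedAddCommGroup E] [NormedSpace 𝕜 E] [FiniteDimensional 𝕜 E]
    [NormedAddCommGroup F] [NormedSpace 𝕜 F] [FiniteDimensional 𝕜 F]
    (L : E →L[𝕜] F) (hL : Function.Injective L)
    (hdim : Module.finrank 𝕜 E = Module.finrank 𝕜 F) : L.IsInvertible :=
  ⟨(LinearMap.linearEquivOfInjective (L : E →ₗ[𝕜] F) hL hdim).toContinuousLinearEquiv, rfl⟩

theorem ContDiffAt.exists_contDiffOn_implicitFunction
    {𝕜 : Type*} [RCLike 𝕜]
    {E₁ : Type*} [NormedAddCommGroup E₁] [NormedSpace 𝕜 E₁] [CompleteSpace E₁]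
    {E₂ : Type*} [NormedAddCommGroup E₂] [NormedSpace 𝕜 E₂] [CompleteSpace E₂]
    {F : Type*} [NormedAddCommGroup F] [NormedSpace 𝕜 F] [CompleteSpace F]
    {f : E₁ × E₂ → F} {u : E₁ × E₂} {n : WithTop ℕ∞} (hf : ContDiffAt 𝕜 n f u)
    (hn : n ≠ 0) (hn' : n ≠ ∞) (hinv : (fderiv 𝕜 f u ∘L .inr 𝕜 E₁ E₂).IsInvertible)
    {W : Set E₂} (hW : W ∈ 𝓝 u.2) :
    ∃ (U : Set E₁) (V : Set E₂) (g : E₁ → E₂), IsOpen U ∧ u.1 ∈ U ∧ IsOpen V ∧ u.2 ∈ V ∧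
      V ⊆ W ∧ ContDiffOn 𝕜 n g U ∧ g u.1 = u.2 ∧
      ∀ y ∈ U, g y ∈ V ∧ f (y, g y) = f u ∧ ∀ p ∈ V, f (y, p) = f u → p = g y := by
  set g := hf.implicitFunction hn hinv
  have hsolve : {v | f v = f u ↔ g v.1 = v.2} ∈ 𝓝 (u.1, u.2) :=
    hf.eventually_apply_eq_iff_implicitFunction hn hinv
  obtain ⟨U₀, V₀, hU₀, hu₁U₀, hV₀, hu₂V₀, hUV₀⟩ := mem_nhds_prod_iff'.1 hsolve
  obtain ⟨U₁, hU₁g, hU₁, hu₁U₁⟩ := eventually_nhds_iff.1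
    ((hf.contDiffAt_implicitFunction hn hinv).eventually hn')
  obtain ⟨V, hVW, hV, hu₂V⟩ := mem_nhds_iff.1 (inter_mem (hV₀.mem_nhds hu₂V₀) hW)
  have hgu : g u.1 = u.2 := hf.implicitFunction_apply_self hn hinv
  have hg_cont : ContinuousOn g (U₀ ∩ U₁) :=
    fun y hy => (hU₁g y hy.2).continuousAt.continuousWithinAt
  refine ⟨U₀ ∩ U₁ ∩ g ⁻¹' V, V, g, hg_cont.isOpen_inter_preimage (hU₀.inter hU₁) hV,
    ⟨⟨hu₁U₀, hu₁U₁⟩, by simpa [hgu] using hu₂V⟩, hV, hu₂V, fun p hp => (hVW hp).2,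
    fun y hy => (hU₁g y hy.1.2).contDiffWithinAt, hgu, fun y hy => ⟨hy.2, ?_, fun p hp hfp => ?_⟩⟩
  · exact (hUV₀ (Set.mk_mem_prod hy.1.1 (hVW hy.2).1)).2 rfl
  · exact ((hUV₀ (Set.mk_mem_prod hy.1.1 (hVW hp).1)).1 hfp).symm

section EuclideanSpace

variable {ι : Type*} [Fintype ι] [DecidableEq ι]

theorem EuclideanSpace.continuousLinearMap_apply_eq_sum_single {F : Type*} [AddCommGroup F]
    [Module ℝ F] [TopologicalSpace F] (L : EuclideanSpace ℝ ι →L[ℝ] F) (v : EuclideanSpace ℝ ι) :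
    L v = ∑ r, v r • L (EuclideanSpace.single r 1) := by
  conv_lhs => rw [← (EuclideanSpace.basisFun ι ℝ).sum_repr v]
  simp [map_sum, map_smul]

theorem EuclideanSpace.continuousLinearMap_eq_zero_of_single {F : Type*} [AddCommGroup F]
    [Module ℝ F] [TopologicalSpace F] {L : EuclideanSpace ℝ ι →L[ℝ] F}
    (hL : ∀ r, L (EuclideanSpace.single r 1) = 0) : L = 0 := by
  ext v
  simp [continuousLinearMap_apply_eq_sum_single L v, hL]

theorem EuclideanSpace.pos_of_posDef_apply_single
    (B : EuclideanSpace ℝ ι →L[ℝ] EuclideanSpace ℝ ι →L[ℝ] ℝ)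
    (hB : (Matrix.of fun r t => B (EuclideanSpace.single r 1) (EuclideanSpace.single t 1)).PosDef)
    {v : EuclideanSpace ℝ ι} (hv : v ≠ 0) : 0 < B v v := by
  have hpos := hB.dotProduct_mulVec_pos (x := v.ofLp) (by simpa using hv)
  have hexp : B v v =
      ∑ r, v r * ∑ t, B (EuclideanSpace.single r 1) (EuclideanSpace.single t 1) * v t := by
    rw [continuousLinearMap_apply_eq_sum_single B v]
    simp only [_root_.sum_apply, _root_.smul_apply, smul_eq_mul]
    refine Finset.sum_congr rfl fun r _ => ?_
    rw [continuousLinearMap_apply_eq_sum_single (B _) v]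
    simp [mul_comm]
  simpa [dotProduct, mulVec, hexp] using hpos

theorem EuclideanSpace.pos_of_posDef_iteratedFDeriv_two {m : Type*} [Fintype m] {c : ℝ}
    {R : m → ℝ} {f : m → EuclideanSpace ℝ ι → ℝ} {x : EuclideanSpace ℝ ι}
    (h : (Matrix.of fun r t => c * ∑ i, R i * iteratedFDeriv ℝ 2 (f i) x
      ![EuclideanSpace.single r 1, EuclideanSpace.single t 1]).PosDef)
    {w : EuclideanSpace ℝ ι} (hw : w ≠ 0) :
    0 < c * ∑ i, R i * fderiv ℝ (fderiv ℝ (f i)) x w w := by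
  simpa using pos_of_posDef_apply_single (c • ∑ i, R i • fderiv ℝ (fderiv ℝ (f i)) x)
    (by simpa [iteratedFDeriv_two_apply] using h) hw

end EuclideanSpace

theorem pos_mul_of_pos_one_div_mul {b x : ℝ} (h : 0 < 1 / b * x) : 0 < b * x := by
  have hb : b ≠ 0 := by rintro rfl; simp at h
  have : b * x = b ^ 2 * (1 / b * x) := by field_simp
  rw [this]
  positivity

namespace Blasso

section Linearization

variable {ι m E : Type*} [Fintype ι] [Fintype m] [NormedAddCommGroup E] [NormedSpace ℝ E]
  {Φ : ι → m → ℝ} {A : ι → m → E →L[ℝ] ℝ} {B : ι → m → E →L[ℝ] E →L[ℝ] ℝ} {R : m → ℝ}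
  {β dβ : ι → ℝ} {dX : ι → E} {dr : m → ℝ}

/- `Φ j i`, `A j i`, `B j i` stand for `φ_i(x_j)`, `Dφ_i(x_j)`, `D²φ_i(x_j)` and `R` for the
residual; `h₁` and `h₂` say that the linearized optimality system vanishes at `(dβ, dX)`. -/
theorem sum_sq_add_sum_eq_zero_of_linearized_optimality
    (hA : ∀ j, ∑ i, R i • A j i = 0)
    (hdr : ∀ i, dr i = ∑ l, (dβ l * Φ l i + β l * A l i (dX l)))
    (h₁ : ∀ j, ∑ i, (A j i (dX j) * R i + Φ j i * dr i) = 0)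
    (h₂ : ∀ j, ∑ i, (R i • B j i (dX j) + dr i • A j i) = 0) :
    ∑ i, dr i ^ 2 + ∑ j, β j * ∑ i, R i * B j i (dX j) (dX j) = 0 := by
  have hAdX : ∀ j, ∑ i, A j i (dX j) * R i = 0 := fun j => by
    simpa [mul_comm] using congr($(hA j) (dX j))
  have hΦdr : ∀ j, ∑ i, Φ j i * dr i = 0 := fun j => by
    simpa [Finset.sum_add_distrib, hAdX] using h₁ j
  have hAdr : ∀ j, ∑ i, A j i (dX j) * dr i = -∑ i, R i * B j i (dX j) (dX j) := fun j => by
    have := congr($(h₂ j) (dX j))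
    simp only [_root_.sum_apply, _root_.add_apply, _root_.smul_apply, smul_eq_mul,
      Finset.sum_add_distrib, _root_.zero_apply] at this
    simp only [mul_comm (A _ _ _)]
    linarith
  have hsq : ∑ i, dr i ^ 2 =
      ∑ l, (dβ l * ∑ i, Φ l i * dr i + β l * ∑ i, A l i (dX l) * dr i) := by
    simp only [sq, Finset.mul_sum]
    conv_lhs => enter [2, i, 1]; rw [hdr i]
    simp only [Finset.sum_mul, add_mul]
    rw [Finset.sum_comm]
    simp only [Finset.sum_add_distrib]
    congr 1 <;> exact Finset.sum_congr rfl fun l _ => Finset.sum_congr rfl fun i _ => by ring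
  simp [hsq, hΦdr, hAdr]

theorem eq_zero_of_linearized_optimality
    (hΦ : ∀ v : ι → ℝ, (fun i => ∑ j, v j * Φ j i) = 0 → v = 0)
    (hA : ∀ j, ∑ i, R i • A j i = 0)
    (hB : ∀ j w, w ≠ 0 → 0 < 1 / β j * ∑ i, R i * B j i w w)
    (hdr : ∀ i, dr i = ∑ l, (dβ l * Φ l i + β l * A l i (dX l)))
    (h₁ : ∀ j, ∑ i, (A j i (dX j) * R i + Φ j i * dr i) = 0)
    (h₂ : ∀ j, ∑ i, (R i • B j i (dX j) + dr i • A j i) = 0) :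
    dβ = 0 ∧ dX = 0 := by
  set q : ι → ℝ := fun j => β j * ∑ i, R i * B j i (dX j) (dX j)
  have hsum : ∑ i, dr i ^ 2 + ∑ j, q j = 0 :=
    sum_sq_add_sum_eq_zero_of_linearized_optimality hA hdr h₁ h₂
  have hq : ∀ j, 0 ≤ q j ∧ (q j = 0 → dX j = 0) := fun j => by
    by_cases h : dX j = 0
    · simp [q, h]
    · have := pos_mul_of_pos_one_div_mul (hB j (dX j) h)
      exact ⟨this.le, fun h0 => absurd h0 this.ne'⟩
  have hsq := Finset.sum_nonneg fun i (_ : i ∈ Finset.univ) => sq_nonneg (dr i)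
  have hqs := Finset.sum_nonneg fun j (_ : j ∈ Finset.univ) => (hq j).1
  have hdr0 : ∀ i, dr i = 0 := fun i => by
    have := (Finset.sum_eq_zero_iff_of_nonneg fun i _ => sq_nonneg (dr i)).1 (by linarith) i
    simpa using this (Finset.mem_univ i)
  have hdX : dX = 0 := funext fun j =>
    (hq j).2 ((Finset.sum_eq_zero_iff_of_nonneg fun j _ => (hq j).1).1 (by linarith) j
      (Finset.mem_univ j))
  refine ⟨hΦ dβ (funext fun i => ?_), hdX⟩
  simpa [hdX, hdr i] using hdr0 i

end Linearization

variable {d n k : ℕ} (φ : EuclideanSpace ℝ (Fin d) → EuclideanSpace ℝ (Fin n))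

noncomputable def residual (β : Fin k → ℝ) (X : Fin k → EuclideanSpace ℝ (Fin d))
    (y : EuclideanSpace ℝ (Fin n)) (i : Fin n) : ℝ :=
  (∑ l, β l * φ (X l) i) - y i

noncomputable def residualDeriv (β dβ : Fin k → ℝ) (X dX : Fin k → EuclideanSpace ℝ (Fin d))
    (i : Fin n) : ℝ :=
  ∑ l, (dβ l * φ (X l) i + β l * fderiv ℝ (fun x => φ x i) (X l) (dX l))

/-- The paper's `F(β, X, y)`, with the data `y` first, as the implicit function theorem
expects. -/
noncomputable def optimalityMap (lam : ℝ) (s : Fin k → ℝ)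
    (q : EuclideanSpace ℝ (Fin n) × (Fin k → ℝ) × (Fin k → EuclideanSpace ℝ (Fin d))) :
    Fin k ⊕ Fin k × Fin d → ℝ :=
  Sum.elim (fun j => ∑ i, φ (q.2.2 j) i * residual φ q.2.1 q.2.2 q.1 i + lam * s j)
    (fun jr => ∑ i, fderiv ℝ (fun x => φ x i) (q.2.2 jr.1) (EuclideanSpace.single jr.2 1) *
      residual φ q.2.1 q.2.2 q.1 i)

noncomputable def optimalityMapDeriv (β dβ : Fin k → ℝ) (X dX : Fin k → EuclideanSpace ℝ (Fin d))
    (y : EuclideanSpace ℝ (Fin n)) : Fin k ⊕ Fin k × Fin d → ℝ :=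
  Sum.elim
    (fun j => ∑ i, (fderiv ℝ (fun x => φ x i) (X j) (dX j) * residual φ β X y i +
      φ (X j) i * residualDeriv φ β dβ X dX i))
    (fun jr => ∑ i, (fderiv ℝ (fderiv ℝ (fun x => φ x i)) (X jr.1) (dX jr.1)
        (EuclideanSpace.single jr.2 1) * residual φ β X y i +
      fderiv ℝ (fun x => φ x i) (X jr.1) (EuclideanSpace.single jr.2 1) *
        residualDeriv φ β dβ X dX i))

variable {φ} {β dβ : Fin k → ℝ} {X dX : Fin k → EuclideanSpace ℝ (Fin d)}
  {y : EuclideanSpace ℝ (Fin n)}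

theorem hasDerivAt_residual (hφ : ∀ i l, DifferentiableAt ℝ (fun x => φ x i) (X l)) (i : Fin n) :
    HasDerivAt (fun t : ℝ => residual φ (β + t • dβ) (X + t • dX) y i)
      (residualDeriv φ β dβ X dX i) 0 := by
  have hβ : ∀ l, HasDerivAt (fun t : ℝ => β l + t * dβ l) (dβ l) 0 := fun l => by
    simpa using ((hasDerivAt_id (0 : ℝ)).mul_const (dβ l)).const_add (β l)
  have := (HasDerivAt.fun_sum (u := Finset.univ) fun l _ =>
    (hβ l).mul ((hφ i l).hasFDerivAt.hasLineDerivAt (dX l))).sub_const (y i)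
  simpa [residual, residualDeriv, mul_comm] using this

theorem hasLineDerivAt_optimalityMap (hφ : ∀ i l, ContDiffAt ℝ 2 (fun x => φ x i) (X l))
    (lam : ℝ) (s : Fin k → ℝ) :
    HasLineDerivAt ℝ (optimalityMap φ lam s) (optimalityMapDeriv φ β dβ X dX y)
      (y, β, X) (0, dβ, dX) := by
  have hdiff : ∀ i l, DifferentiableAt ℝ (fun x => φ x i) (X l) :=
    fun i l => (hφ i l).differentiableAt (by norm_num)
  have hres := hasDerivAt_residual (β := β) (y := y) (dβ := dβ) (dX := dX) hdiff
  rw [HasLineDerivAt, hasDerivAt_pi]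
  rintro (j | ⟨j, r⟩)
  · have := (HasDerivAt.fun_sum (u := Finset.univ) fun i _ =>
      ((hdiff i j).hasFDerivAt.hasLineDerivAt (dX j)).mul (hres i)).add_const (lam * s j)
    simpa [optimalityMap, optimalityMapDeriv] using this
  · have hD : ∀ i, HasDerivAt
        (fun t : ℝ => fderiv ℝ (fun x => φ x i) (X j + t • dX j) (EuclideanSpace.single r 1))
        (fderiv ℝ (fderiv ℝ (fun x => φ x i)) (X j) (dX j) (EuclideanSpace.single r 1)) 0 :=
      fun i => by
        simpa using ((((hφ i j).fderiv_right (m := 1) (by norm_num)).differentiableAt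
          (by norm_num)).hasFDerivAt.hasLineDerivAt (dX j)).clm_apply
            (hasDerivAt_const 0 (EuclideanSpace.single r 1))
    have := HasDerivAt.fun_sum (u := Finset.univ) fun i _ => (hD i).mul (hres i)
    simpa [optimalityMap, optimalityMapDeriv] using this

theorem contDiffAt_optimalityMap (hφ : ∀ i l, ContDiffAt ℝ 2 (fun x => φ x i) (X l))
    (lam : ℝ) (s : Fin k → ℝ) : ContDiffAt ℝ 1 (optimalityMap φ lam s) (y, β, X) := by
  have hXq : ∀ l, ContDiffAt ℝ 1
      (fun q : EuclideanSpace ℝ (Fin n) × (Fin k → ℝ) × (Fin k → EuclideanSpace ℝ (Fin d)) =>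
        q.2.2 l) (y, β, X) := fun l => by fun_prop
  have hφq : ∀ i l, ContDiffAt ℝ 1
      (fun q : EuclideanSpace ℝ (Fin n) × (Fin k → ℝ) × (Fin k → EuclideanSpace ℝ (Fin d)) =>
        φ (q.2.2 l) i) (y, β, X) := fun i l =>
    ((hφ i l).of_le (m := 1) (by norm_num)).comp (g := fun x => φ x i) (y, β, X) (hXq l)
  have hres : ∀ i, ContDiffAt ℝ 1
      (fun q : EuclideanSpace ℝ (Fin n) × (Fin k → ℝ) × (Fin k → EuclideanSpace ℝ (Fin d)) =>
        residual φ q.2.1 q.2.2 q.1 i) (y, β, X) := fun i => by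
    unfold residual
    exact (ContDiffAt.sum fun l _ => (by fun_prop : ContDiffAt ℝ 1 _ _).mul (hφq i l)).sub
      (by fun_prop)
  rw [contDiffAt_pi]
  rintro (j | ⟨j, r⟩) <;> simp only [optimalityMap, Sum.elim_inl, Sum.elim_inr]
  · exact (ContDiffAt.sum fun i _ => (hφq i j).mul (hres i)).add contDiffAt_const
  · refine ContDiffAt.sum fun i _ => ContDiffAt.mul ?_ (hres i)
    exact (((hφ i j).fderiv_right (m := 1) (by norm_num)).comp (y, β, X) (hXq j)).clm_apply
      contDiffAt_const

theorem sum_residual_smul_fderiv_eq_zero {lam : ℝ} {s : Fin k → ℝ}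
    (h : optimalityMap φ lam s (y, β, X) = 0) (j : Fin k) :
    ∑ i, residual φ β X y i • fderiv ℝ (fun x => φ x i) (X j) = 0 :=
  EuclideanSpace.continuousLinearMap_eq_zero_of_single fun r => by
    simpa [optimalityMap, mul_comm] using congr_fun h (.inr (j, r))

theorem injective_fderiv_optimalityMap_comp_inr
    (hφ : ∀ i l, ContDiffAt ℝ 2 (fun x => φ x i) (X l))
    (hΦ : ∀ v : Fin k → ℝ, (fun i => ∑ j, v j * φ (X j) i) = 0 → v = 0)
    (hstat : ∀ j, ∑ i, residual φ β X y i • fderiv ℝ (fun x => φ x i) (X j) = 0)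
    (hpos : ∀ j w, w ≠ 0 →
      0 < 1 / β j * ∑ i, residual φ β X y i * fderiv ℝ (fderiv ℝ (fun x => φ x i)) (X j) w w)
    (lam : ℝ) (s : Fin k → ℝ) :
    Function.Injective (fderiv ℝ (optimalityMap φ lam s) (y, β, X) ∘L .inr ℝ _ _) := by
  rw [injective_iff_map_eq_zero]
  rintro ⟨dβ, dX⟩ h
  have hline := hasLineDerivAt_optimalityMap (β := β) (y := y) (dβ := dβ) (dX := dX) hφ lam s
  rw [ContinuousLinearMap.comp_apply, ContinuousLinearMap.inr_apply,
    ← ((contDiffAt_optimalityMap hφ lam s).differentiableAt one_ne_zero).lineDeriv_eq_fderiv,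
    hline.lineDeriv] at h
  obtain ⟨rfl, rfl⟩ := eq_zero_of_linearized_optimality (Φ := fun j i => φ (X j) i)
    (A := fun j i => fderiv ℝ (fun x => φ x i) (X j))
    (B := fun j i => fderiv ℝ (fderiv ℝ (fun x => φ x i)) (X j))
    (R := residual φ β X y) hΦ hstat hpos (dr := residualDeriv φ β dβ X dX) (fun i => rfl)
    (fun j => congr_fun h (.inl j))
    (fun j => EuclideanSpace.continuousLinearMap_eq_zero_of_single fun r => by
      simpa [optimalityMapDeriv, mul_comm] using congr_fun h (.inr (j, r)))
  rfl

end Blasso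

theorem blasso_c1_solution_path_general {d n k : ℕ}
    (Ω : Set (EuclideanSpace ℝ (Fin d))) (hΩ : IsOpen Ω)
    (φ : EuclideanSpace ℝ (Fin d) → EuclideanSpace ℝ (Fin n))
    (hφ : ContDiffOn ℝ 2 φ Ω)
    (lam : ℝ)
    (s : Fin k → ℝ)
    (F : (Fin k → ℝ) → (Fin k → EuclideanSpace ℝ (Fin d)) → EuclideanSpace ℝ (Fin n) →
      (Fin k ⊕ Fin k × Fin d) → ℝ)
    (hF : F = fun β X y =>
      (Matrix.of fun (i : Fin n) (c : Fin k ⊕ Fin k × Fin d) => Sum.elim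
        (fun j => φ (X j) i)
        (fun jr => fderiv ℝ (fun x => φ x i) (X jr.1) (EuclideanSpace.single jr.2 1)) c)ᵀ.mulVec
          (fun i => (∑ j, β j * φ (X j) i) - y i)
        + lam • Sum.elim s fun _ => 0)
    (βbar : Fin k → ℝ) (Xbar : Fin k → EuclideanSpace ℝ (Fin d))
    (hXΩ : ∀ j, Xbar j ∈ Ω)
    (ybar : EuclideanSpace ℝ (Fin n))
    (hzero : F βbar Xbar ybar = 0)
    (hinj : ∀ v : Fin k → ℝ, (fun i : Fin n => ∑ j, v j * φ (Xbar j) i) = 0 → v = 0)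
    (hZ : ∀ j, Matrix.PosDef (Matrix.of fun r t : Fin d =>
      (1 / βbar j) * ∑ i, ((∑ j' , βbar j' * φ (Xbar j') i) - ybar i) *
        iteratedFDeriv ℝ 2 (fun x => φ x i) (Xbar j)
          ![EuclideanSpace.single r 1, EuclideanSpace.single t 1])) :
    ∃ (U : Set (EuclideanSpace ℝ (Fin n)))
      (V : Set ((Fin k → ℝ) × (Fin k → EuclideanSpace ℝ (Fin d))))
      (g : EuclideanSpace ℝ (Fin n) → (Fin k → ℝ) × (Fin k → EuclideanSpace ℝ (Fin d))),
      IsOpen U ∧ ybar ∈ U ∧ IsOpen V ∧ (βbar, Xbar) ∈ V ∧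
      (∀ p ∈ V, ∀ j, p.2 j ∈ Ω) ∧
      ContDiffOn ℝ 1 g U ∧ g ybar = (βbar, Xbar) ∧
      ∀ y ∈ U, g y ∈ V ∧ F (g y).1 (g y).2 y = 0 ∧
        ∀ p ∈ V, F p.1 p.2 y = 0 → p = g y := by
  have hφ' : ∀ i l, ContDiffAt ℝ 2 (fun x => φ x i) (Xbar l) := fun i l =>
    (EuclideanSpace.proj (𝕜 := ℝ) i).contDiff.contDiffAt.comp
      (g := fun v : EuclideanSpace ℝ (Fin n) => v i) _ (hφ.contDiffAt (hΩ.mem_nhds (hXΩ l)))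
  have hFeq : ∀ β X y, F β X y = Blasso.optimalityMap φ lam s (y, β, X) := by
    subst hF
    intro β X y
    funext c
    cases c <;> simp [Blasso.optimalityMap, Blasso.residual, mulVec, dotProduct]
  rw [hFeq] at hzero
  have hinv := ContinuousLinearMap.isInvertible_of_injective _
    (Blasso.injective_fderiv_optimalityMap_comp_inr hφ' hinj
      (Blasso.sum_residual_smul_fderiv_eq_zero hzero)
      (fun j _ hw => EuclideanSpace.pos_of_posDef_iteratedFDeriv_two (hZ j) hw) lam s)
    (by simp [Module.finrank_prod, Module.finrank_pi_fintype, finrank_euclideanSpace])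
  have hW : Prod.snd ⁻¹' Set.univ.pi (fun _ => Ω) ∈ 𝓝 (βbar, Xbar) :=
    (isOpen_set_pi Set.finite_univ fun _ _ => hΩ).preimage continuous_snd |>.mem_nhds
      fun j _ => hXΩ j
  obtain ⟨U, V, g, hU, hyU, hV, hpV, hVW, hg, hgy, hsol⟩ :=
    (Blasso.contDiffAt_optimalityMap hφ' lam s).exists_contDiffOn_implicitFunction one_ne_zero
      (by simp) hinv hW
  refine ⟨U, V, g, hU, hyU, hV, hpV, fun p hp j => hVW hp j (Set.mem_univ j), hg, hgy,
    fun y hy => ?_⟩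
  simpa only [hFeq, hzero] using hsol y hy

/-- (The C¹ solution-path construction in the proof of Theorem 4.2.)
Let `Ω ⊆ ℝ^d` be open, `φ : Ω → ℝ^n` twice continuously differentiable, `λ > 0`,
`s ∈ {−1,+1}^k`, and `F(β, X, y) = Γ_Xᵀ(Φ_X β − y) + λ(s, 0)`. If `F(β̄, X̄, ȳ) = 0`,
`Φ_{X̄}` is injective, every `β̄_j ≠ 0`, and each `(1/β̄_j) Z_j` is positive definite
(`Z_j = Σ_i (Φ_{X̄}β̄ − ȳ)_i ∇²φ_i(x̄_j)`), then there are open neighbourhoods `U ∋ ȳ`,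
`V ∋ (β̄, X̄)` (contained in `ℝ^k × Ω^k`) and a `C¹` map `g : U → V` with `g(ȳ) = (β̄, X̄)`,
`F(g(y), y) = 0` on `U`, and `g(y)` is the unique zero of `F(·, ·, y)` in `V`. -/
theorem blasso_c1_solution_path {d n k : ℕ}
    (Ω : Set (EuclideanSpace ℝ (Fin d))) (hΩ : IsOpen Ω)
    (φ : EuclideanSpace ℝ (Fin d) → EuclideanSpace ℝ (Fin n))
    (hφ : ContDiffOn ℝ 2 φ Ω)
    (lam : ℝ) (hlam : 0 < lam)
    (s : Fin k → ℝ) (hs : ∀ j, s j = 1 ∨ s j = -1)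
    (F : (Fin k → ℝ) → (Fin k → EuclideanSpace ℝ (Fin d)) → EuclideanSpace ℝ (Fin n) →
      (Fin k ⊕ Fin k × Fin d) → ℝ)
    (hF : F = fun β X y =>
      (Matrix.of fun (i : Fin n) (c : Fin k ⊕ Fin k × Fin d) => Sum.elim
        (fun j => φ (X j) i)
        (fun jr => fderiv ℝ (fun x => φ x i) (X jr.1) (EuclideanSpace.single jr.2 1)) c)ᵀ.mulVec
          (fun i => (∑ j, β j * φ (X j) i) - y i)
        + lam • Sum.elim s fun _ => 0)
    (βbar : Fin k → ℝ) (Xbar : Fin k → EuclideanSpace ℝ (Fin d))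
    (hXΩ : ∀ j, Xbar j ∈ Ω)
    (ybar : EuclideanSpace ℝ (Fin n))
    (hzero : F βbar Xbar ybar = 0)
    (hinj : ∀ v : Fin k → ℝ, (fun i : Fin n => ∑ j, v j * φ (Xbar j) i) = 0 → v = 0)
    (hβ : ∀ j, βbar j ≠ 0)
    (hZ : ∀ j, Matrix.PosDef (Matrix.of fun r t : Fin d =>
      (1 / βbar j) * ∑ i, ((∑ j' , βbar j' * φ (Xbar j') i) - ybar i) *
        iteratedFDeriv ℝ 2 (fun x => φ x i) (Xbar j)
          ![EuclideanSpace.single r 1, EuclideanSpace.single t 1])) :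
    ∃ (U : Set (EuclideanSpace ℝ (Fin n)))
      (V : Set ((Fin k → ℝ) × (Fin k → EuclideanSpace ℝ (Fin d))))
      (g : EuclideanSpace ℝ (Fin n) → (Fin k → ℝ) × (Fin k → EuclideanSpace ℝ (Fin d))),
      IsOpen U ∧ ybar ∈ U ∧ IsOpen V ∧ (βbar, Xbar) ∈ V ∧
      (∀ p ∈ V, ∀ j, p.2 j ∈ Ω) ∧
      ContDiffOn ℝ 1 g U ∧ g ybar = (βbar, Xbar) ∧
      ∀ y ∈ U, g y ∈ V ∧ F (g y).1 (g y).2 y = 0 ∧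
        ∀ p ∈ V, F p.1 p.2 y = 0 → p = g y :=
  blasso_c1_solution_path_general Ω hΩ φ hφ lam s F hF βbar Xbar hXΩ ybar hzero hinj hZ
end

section
/- Let Ω be a compact metric space, φ : Ω → ℝ^n continuous, and λ > 0. For any y, y' ∈ ℝ^n, if m minimizes the Blasso objective J_y and m' minimizes J_{y'} over all finite signed Borel measures on Ω, then ‖Φm − Φm'‖₂ ≤ ‖y − y'‖₂. In particular the estimator y ↦ μ̂(y) := Φ m_y is Lipschitz continuous on ℝ^n (hence differentiable almost everywhere). -/
/-!
Φ is linear in the measure (it is the vector-measure integral `∫ᵛ x, φ x ∂<•m`) and the total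
variation is convex. Comparing `J_y(m)` with `J_y((1 - t) m + t m')` and `J_{y'}(m')` with
`J_{y'}(t m + (1 - t) m')`, the penalty terms cancel in the sum; dividing by `t` and letting
`t → 0` gives the firm nonexpansiveness `‖Φm − Φm'‖² ≤ ⟪y − y', Φm − Φm'⟫`, and Cauchy–Schwarz
concludes.
-/

open MeasureTheory

/-- `Φ m = ∫ φ dm` for a finite signed Borel measure `m`, via the Jordan decomposition. -/
noncomputable def blassoPhi {Ω : Type*} [MeasurableSpace Ω] {ι : Type*} [Fintype ι]
    (φ : Ω → EuclideanSpace ℝ ι) (m : SignedMeasure Ω) : EuclideanSpace ℝ ι :=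
  (∫ x, φ x ∂m.toJordanDecomposition.posPart) -
    ∫ x, φ x ∂m.toJordanDecomposition.negPart

/-- The Blasso objective `J_y(m) = (1/2)‖Φm − y‖₂² + λ|m|_TV`. -/
noncomputable def blassoObj {Ω : Type*} [MeasurableSpace Ω] {ι : Type*} [Fintype ι]
    (φ : Ω → EuclideanSpace ℝ ι) (lam : ℝ) (y : EuclideanSpace ℝ ι)
    (m : SignedMeasure Ω) : ℝ :=
  (1 / 2) * ‖blassoPhi φ m - y‖ ^ 2 + lam * (m.totalVariation Set.univ).toReal

open Set Filter Topology
open scoped InnerProductSpace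

section InnerProduct

variable {E : Type*} [NormedAddCommGroup E] [InnerProductSpace ℝ E]

theorem norm_le_of_sq_norm_le_inner {u v : E} (h : ‖u‖ ^ 2 ≤ ⟪v, u⟫_ℝ) : ‖u‖ ≤ ‖v‖ := by
  have := real_inner_le_norm v u
  nlinarith [norm_nonneg u, norm_nonneg v]

theorem sq_norm_sub_le_inner_of_forall_Ioo {a b y y' : E}
    (h : ∀ t ∈ Ioo (0 : ℝ) 1, ‖a - y‖ ^ 2 + ‖b - y'‖ ^ 2 ≤
      ‖(1 - t) • a + t • b - y‖ ^ 2 + ‖t • a + (1 - t) • b - y'‖ ^ 2) :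
    ‖a - b‖ ^ 2 ≤ ⟪y - y', a - b⟫_ℝ := by
  have expand : ∀ t : ℝ, ‖(1 - t) • a + t • b - y‖ ^ 2 + ‖t • a + (1 - t) • b - y'‖ ^ 2 =
      ‖a - y‖ ^ 2 + ‖b - y'‖ ^ 2 + 2 * t * ((t - 1) * ‖a - b‖ ^ 2 + ⟪y - y', a - b⟫_ℝ) := by
    intro t
    have h₁ : (1 - t) • a + t • b - y = (a - y) - t • (a - b) := by module
    have h₂ : t • a + (1 - t) • b - y' = (b - y') + t • (a - b) := by module
    have h₃ : ⟪y - y', a - b⟫_ℝ = ‖a - b‖ ^ 2 - ⟪a - y, a - b⟫_ℝ + ⟪b - y', a - b⟫_ℝ := by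
      rw [show y - y' = (a - b) - (a - y) + (b - y') by abel, inner_add_left, inner_sub_left,
        real_inner_self_eq_norm_sq]
    rw [h₁, h₂, h₃, norm_sub_sq_real, norm_add_sq_real, inner_smul_right, inner_smul_right,
      norm_smul, Real.norm_eq_abs, mul_pow, sq_abs]
    ring
  have key : ∀ t ∈ Ioo (0 : ℝ) 1, (1 - t) * ‖a - b‖ ^ 2 ≤ ⟪y - y', a - b⟫_ℝ := by
    intro t ht
    have hsum := h t ht
    rw [expand] at hsum
    nlinarith [ht.1]
  have hlim : Tendsto (fun t : ℝ => (1 - t) * ‖a - b‖ ^ 2) (𝓝[>] 0) (𝓝 (‖a - b‖ ^ 2)) := by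
    have : Tendsto (fun t : ℝ => (1 - t) * ‖a - b‖ ^ 2) (𝓝 0) (𝓝 ((1 - 0) * ‖a - b‖ ^ 2)) :=
      ((continuous_const.sub continuous_id).mul continuous_const).tendsto 0
    simpa using this.mono_left nhdsWithin_le_nhds
  exact le_of_tendsto hlim (eventually_of_mem (Ioo_mem_nhdsGT one_pos) key)

theorem LinearMap.sq_norm_sub_le_inner_of_isMinOn {M : Type*} [AddCommGroup M] [Module ℝ M]
    (A : M →ₗ[ℝ] E) {R : M → ℝ} (hR : ConvexOn ℝ univ R) {y y' : E} {m m' : M}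
    (hm : IsMinOn (fun μ => 1 / 2 * ‖A μ - y‖ ^ 2 + R μ) univ m)
    (hm' : IsMinOn (fun μ => 1 / 2 * ‖A μ - y'‖ ^ 2 + R μ) univ m') :
    ‖A m - A m'‖ ^ 2 ≤ ⟪y - y', A m - A m'⟫_ℝ := by
  refine sq_norm_sub_le_inner_of_forall_Ioo fun t ht => ?_
  have h₁ := hm (mem_univ ((1 - t) • m + t • m'))
  have h₂ := hm' (mem_univ (t • m + (1 - t) • m'))
  have hR₁ := hR.2 (mem_univ m) (mem_univ m') (sub_nonneg.2 ht.2.le) ht.1.le (sub_add_cancel 1 t)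
  have hR₂ := hR.2 (mem_univ m) (mem_univ m') ht.1.le (sub_nonneg.2 ht.2.le) (add_sub_cancel t 1)
  simp only [mem_ofPred_eq, map_add, map_smul, smul_eq_mul] at h₁ h₂ hR₁ hR₂
  linarith

end InnerProduct

namespace MeasureTheory.SignedMeasure

variable {Ω : Type*} [MeasurableSpace Ω]

theorem totalVariation_add_le (s t : SignedMeasure Ω) :
    (s + t).totalVariation ≤ s.totalVariation + t.totalVariation := by
  simpa only [totalVariation_eq_variation] using VectorMeasure.variation_add_le

theorem totalVariation_smul (c : ℝ) (s : SignedMeasure Ω) :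
    (c • s).totalVariation = ‖c‖₊ • s.totalVariation := by
  simp only [totalVariation_eq_variation, VectorMeasure.variation_smul]

theorem convexOn_totalVariation_univ :
    ConvexOn ℝ univ fun s : SignedMeasure Ω => (s.totalVariation univ).toReal := by
  refine ⟨convex_univ, fun s _ t _ a b ha hb _ => ?_⟩
  calc ((a • s + b • t).totalVariation univ).toReal
      ≤ ((a • s).totalVariation univ + (b • t).totalVariation univ).toReal :=
        ENNReal.toReal_mono (by finiteness) (totalVariation_add_le _ _ univ)
    _ = a * (s.totalVariation univ).toReal + b * (t.totalVariation univ).toReal := by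
        rw [ENNReal.toReal_add (by finiteness) (by finiteness), totalVariation_smul,
          totalVariation_smul]
        simp [Real.nnnorm_of_nonneg ha, Real.nnnorm_of_nonneg hb]

end MeasureTheory.SignedMeasure

section Phi

variable {Ω : Type*} [MeasurableSpace Ω] [TopologicalSpace Ω] [CompactSpace Ω]
  [OpensMeasurableSpace Ω]

theorem Continuous.integrable_signedMeasure {E : Type*} [NormedAddCommGroup E] {f : Ω → E}
    (hf : Continuous f) (s : SignedMeasure Ω) : s.Integrable f := by
  rw [VectorMeasure.Integrable, ← SignedMeasure.totalVariation_eq_variation]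
  exact hf.integrable_of_hasCompactSupport (HasCompactSupport.of_compactSpace f)

variable {ι : Type*} [Fintype ι] {φ : Ω → EuclideanSpace ℝ ι}

theorem blassoPhi_eq_integral (hφ : Continuous φ) (s : SignedMeasure Ω) :
    blassoPhi φ s = ∫ᵛ x, φ x ∂<•s := by
  conv_rhs => rw [← s.toSignedMeasure_toJordanDecomposition]
  rw [JordanDecomposition.toSignedMeasure,
    VectorMeasure.integral_sub_vectorMeasure (hφ.integrable_signedMeasure _)
      (hφ.integrable_signedMeasure _),
    VectorMeasure.integral_toSignedMeasure, VectorMeasure.integral_toSignedMeasure, blassoPhi]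

theorem isLinearMap_blassoPhi (hφ : Continuous φ) : IsLinearMap ℝ (blassoPhi (Ω := Ω) φ) where
  map_add s t := by
    simp only [blassoPhi_eq_integral hφ, VectorMeasure.integral_add_vectorMeasure
      (hφ.integrable_signedMeasure s) (hφ.integrable_signedMeasure t)]
  map_smul c s := by
    simp only [blassoPhi_eq_integral hφ, VectorMeasure.integral_smul_vectorMeasure]

end Phi

/-- If `m` minimizes `J_y` and `m'` minimizes `J_{y'}`, then
`‖Φm − Φm'‖₂ ≤ ‖y − y'‖₂`: the Blasso estimator `y ↦ Φ m_y` is 1-Lipschitz. -/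
theorem blasso_estimator_nonexpansive {Ω : Type*} [MetricSpace Ω] [CompactSpace Ω]
    [MeasurableSpace Ω] [BorelSpace Ω] {n : ℕ}
    (φ : Ω → EuclideanSpace ℝ (Fin n)) (hφ : Continuous φ)
    (lam : ℝ) (hlam : 0 < lam)
    (y y' : EuclideanSpace ℝ (Fin n)) (m m' : SignedMeasure Ω)
    (hm : ∀ μ : SignedMeasure Ω, blassoObj φ lam y m ≤ blassoObj φ lam y μ)
    (hm' : ∀ μ : SignedMeasure Ω, blassoObj φ lam y' m' ≤ blassoObj φ lam y' μ) :
    ‖blassoPhi φ m - blassoPhi φ m'‖ ≤ ‖y - y'‖ :=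
  norm_le_of_sq_norm_le_inner <|
    (isLinearMap_blassoPhi hφ).mk'.sq_norm_sub_le_inner_of_isMinOn
      (SignedMeasure.convexOn_totalVariation_univ.smul hlam.le)
      (isMinOn_univ_iff.2 hm) (isMinOn_univ_iff.2 hm')
end

section
/- Let n, k ∈ ℕ with 1 ≤ k ≤ n and let u_1, …, u_k ∈ ℂ be pairwise distinct and nonzero. If c, d ∈ ℂ^k satisfy Σ_{j=1}^k (c_j + d_j ℓ) u_j^ℓ = 0 for every integer ℓ with −n ≤ ℓ ≤ n, then c = 0 and d = 0. Equivalently, the (2n+1) × 2k complex matrix whose 2k columns are (u_j^ℓ)_{ℓ=−n}^{n} and (ℓ u_j^ℓ)_{ℓ=−n}^{n}, for j = 1, …, k, has rank 2k (trivial kernel). (This is the full-rank statement of Appendix C, proving that for 1-D Fourier sampling the matrix Γ_X = [Φ_X, Φ_X^{(1)}] is always injective for k ≤ f_c distinct positions.) -/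
/-!
With `aⱼ = (cⱼ - n dⱼ) uⱼ⁻ⁿ` and `bⱼ = dⱼ uⱼ⁻ⁿ`, shifting the exponents by `n` turns the hypothesis
into: the functional `p ↦ ∑ⱼ (aⱼ p(uⱼ) + bⱼ uⱼ p'(uⱼ))` kills `Xᵐ` for `m ≤ 2n`, hence every
polynomial of degree at most `2n`. Let `Q = ∏_{j ≠ i} (X - uⱼ)`. Both `(X - uᵢ) Q²` and `Q²` have
double roots at the other nodes and degree below `2k ≤ 2n + 1`; testing the functional against
them isolates first `bᵢ uᵢ` and then `aᵢ`.
-/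

open Polynomial Finset Lagrange

section

variable {R : Type*} [CommRing R] {ι : Type*} [Fintype ι]

theorem mul_eval_derivative_X_pow (x : R) (m : ℕ) :
    x * (X ^ m : R[X]).derivative.eval x = m * x ^ m := by
  cases m with
  | zero => simp
  | succ m =>
    simp only [derivative_X_pow, Nat.add_sub_cancel, eval_mul, eval_C, eval_pow, eval_X]
    push_cast
    ring

theorem sum_eval_add_mul_eval_derivative_eq_zero {N : ℕ} (u a b : ι → R)
    (h : ∀ m < N, ∑ j, (a j + b j * m) * u j ^ m = 0) {p : R[X]} (hp : p.natDegree < N) :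
    ∑ j, (a j * p.eval (u j) + b j * u j * p.derivative.eval (u j)) = 0 := by
  classical
  let φ : R[X] →ₗ[R] R :=
    ∑ j, (a j • leval (u j) + (b j * u j) • (leval (u j) ∘ₗ derivative))
  have hφ : ∀ q, φ q = ∑ j, (a j * q.eval (u j) + b j * u j * q.derivative.eval (u j)) := by
    intro q
    simp [φ]
  have hker : degreeLT R N ≤ LinearMap.ker φ := by
    rw [degreeLT_eq_span_X_pow, Submodule.span_le, coe_image, Set.image_subset_iff]
    intro m hm
    rw [Set.mem_preimage, SetLike.mem_coe, LinearMap.mem_ker, hφ, ← h m (mem_range.1 hm)]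
    refine sum_congr rfl fun j _ => ?_
    rw [mul_assoc (b j), mul_eval_derivative_X_pow, eval_pow, eval_X]
    ring
  rw [← hφ]
  exact hker (mem_degreeLT.2 ((degree_le_natDegree).trans_lt (by exact_mod_cast hp)))

theorem eval_eq_zero_and_eval_derivative_eq_zero_of_sq_dvd {p : R[X]} {x : R}
    (h : (X - C x) ^ 2 ∣ p) : p.eval x = 0 ∧ p.derivative.eval x = 0 :=
  ⟨dvd_iff_isRoot.1 ((dvd_pow_self _ two_ne_zero).trans h),
    dvd_iff_isRoot.1 (by simpa using pow_sub_one_dvd_derivative_of_pow_dvd h)⟩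

theorem sum_eval_add_eval_derivative_eq_single (u a b : ι → R) {p : R[X]} (i : ι)
    (hp : ∀ j ≠ i, (X - C (u j)) ^ 2 ∣ p) :
    ∑ j, (a j * p.eval (u j) + b j * p.derivative.eval (u j)) =
      a i * p.eval (u i) + b i * p.derivative.eval (u i) := by
  refine sum_eq_single i (fun j _ hj => ?_) (by simp)
  obtain ⟨h₀, h₁⟩ := eval_eq_zero_and_eval_derivative_eq_zero_of_sq_dvd (hp j hj)
  rw [h₀, h₁, mul_zero, mul_zero, add_zero]

/-- Uniqueness in Hermite interpolation with values and first derivatives at distinct nodes. -/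
theorem eq_zero_of_sum_eval_add_eval_derivative_eq_zero [IsDomain R] (u : ι → R)
    (hu : Function.Injective u) (a b : ι → R)
    (h : ∀ p : R[X], p.natDegree < 2 * Fintype.card ι →
      ∑ j, (a j * p.eval (u j) + b j * p.derivative.eval (u j)) = 0) :
    a = 0 ∧ b = 0 := by
  classical
  suffices ∀ i, a i = 0 ∧ b i = 0 from ⟨funext fun i => (this i).1, funext fun i => (this i).2⟩
  intro i
  set Q := nodal (univ.erase i) u
  have hcard : 0 < Fintype.card ι := Fintype.card_pos_iff.2 ⟨i⟩
  have hQ : Q.natDegree = Fintype.card ι - 1 := by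
    rw [natDegree_nodal, card_erase_of_mem (mem_univ i), card_univ]
  have hQi : Q.eval (u i) ≠ 0 :=
    eval_nodal_not_at_node fun j hj => hu.ne (mem_erase.1 hj).1.symm
  have hdvd : ∀ j ≠ i, ∀ P : R[X], X - C (u j) ∣ P → (X - C (u j)) ^ 2 ∣ P * Q := fun j hj P hP =>
    pow_two (X - C (u j)) ▸ mul_dvd_mul hP (X_sub_C_dvd_nodal u (mem_erase.2 ⟨hj, mem_univ j⟩))
  have hb : b i = 0 := by
    have hP := h (nodal univ u * Q) <| by
      refine (natDegree_mul_le).trans_lt ?_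
      rw [hQ, natDegree_nodal, card_univ]
      omega
    rw [sum_eval_add_eval_derivative_eq_single u a b i
      fun j hj => hdvd j hj _ (X_sub_C_dvd_nodal u (mem_univ j))] at hP
    simpa [derivative_mul, eval_nodal_at_node, eval_nodal_derivative_eval_node_eq, hQi, Q]
      using hP
  refine ⟨?_, hb⟩
  have hP := h (Q * Q) <| by
    refine (natDegree_mul_le).trans_lt ?_
    rw [hQ]
    omega
  rw [sum_eval_add_eval_derivative_eq_single u a b i fun j hj => hdvd j hj _
    (X_sub_C_dvd_nodal u (mem_erase.2 ⟨hj, mem_univ j⟩)), hb] at hP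
  simpa [hQi, Q] using hP

end

theorem sum_mul_pow_eq_zero_of_sum_mul_zpow_eq_zero {K : Type*} [Field K] {ι : Type*}
    [Fintype ι] {n : ℕ} (u c d : ι → K) (hu : ∀ j, u j ≠ 0)
    (h : ∀ ℓ : ℤ, -(n : ℤ) ≤ ℓ → ℓ ≤ n → ∑ j, (c j + d j * (ℓ : K)) * u j ^ ℓ = 0) :
    ∀ m < 2 * n + 1,
      ∑ j, ((c j - d j * n) * u j ^ (-(n : ℤ)) + d j * u j ^ (-(n : ℤ)) * m) * u j ^ m = 0 := by
  intro m hm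
  rw [← h (m - n) (by omega) (by omega)]
  refine sum_congr rfl fun j _ => ?_
  rw [zpow_sub₀ (hu j), zpow_natCast, div_eq_mul_inv, zpow_neg, zpow_natCast]
  push_cast
  ring

theorem fourier_confluent_vandermonde_injective_general {n k : ℕ} (hkn : k ≤ n)
    (u : Fin k → ℂ) (hinj : Function.Injective u) (hne : ∀ j, u j ≠ 0)
    (c d : Fin k → ℂ)
    (h : ∀ ℓ : ℤ, -(n : ℤ) ≤ ℓ → ℓ ≤ (n : ℤ) →
      ∑ j, (c j + d j * (ℓ : ℂ)) * u j ^ ℓ = 0) :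
    c = 0 ∧ d = 0 := by
  obtain ⟨hc, hd⟩ := eq_zero_of_sum_eval_add_eval_derivative_eq_zero u hinj _ _ fun p hp =>
    sum_eval_add_mul_eval_derivative_eq_zero u _ _
      (sum_mul_pow_eq_zero_of_sum_mul_zpow_eq_zero u c d hne h)
      (by rw [Fintype.card_fin] at hp; omega)
  have hd0 : d = 0 := funext fun j => by simpa [hne j] using congrFun hd j
  refine ⟨funext fun j => ?_, hd0⟩
  simpa [hne j, hd0] using congrFun hc j

/-- Let `1 ≤ k ≤ n` and let `u₁, …, u_k ∈ ℂ` be pairwise distinct and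
nonzero. If `c, d ∈ ℂ^k` satisfy `∑_j (c_j + d_j ℓ) u_j^ℓ = 0` for every integer
`−n ≤ ℓ ≤ n`, then `c = 0` and `d = 0`; i.e. the `(2n+1) × 2k` matrix with columns
`(u_j^ℓ)_ℓ` and `(ℓ u_j^ℓ)_ℓ` has trivial kernel. -/
theorem fourier_confluent_vandermonde_injective {n k : ℕ} (hk : 1 ≤ k) (hkn : k ≤ n)
    (u : Fin k → ℂ) (hinj : Function.Injective u) (hne : ∀ j, u j ≠ 0)
    (c d : Fin k → ℂ)
    (h : ∀ ℓ : ℤ, -(n : ℤ) ≤ ℓ → ℓ ≤ (n : ℤ) →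
      ∑ j, (c j + d j * (ℓ : ℂ)) * u j ^ ℓ = 0) :
    c = 0 ∧ d = 0 :=
  fourier_confluent_vandermonde_injective_general hkn u hinj hne c d h
end

section
/- Let Ω be a compact metric space, φ : Ω → ℝ^n continuous, and y ∈ ℝ^n. Then strong duality holds between the positivity-constrained regression problem and its dual: inf { (1/2)‖Φμ − y‖₂² : μ a finite nonnegative Borel measure on Ω } = sup { −(1/2)‖p + y‖₂² + (1/2)‖y‖₂² : p ∈ K }, and the supremum is attained (at the unique point of the closed convex cone K minimizing ‖p + y‖₂). (This is part (i) of Lemma 7.1 of the paper.) -/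
/-!
Let `K` be the inner dual of `range φ` and `p` the metric projection of `-y` onto the closed
convex cone `K`. The variational inequality of the projection says that `p + y` lies in the
inner dual of `K` and is orthogonal to `p`. Any `z = Φμ` pairs nonnegatively with `p`, which
gives weak duality `½‖z - y‖² ≥ ½‖y‖² - ½‖p + y‖²`; by orthogonality the point `z₀ = p + y`
attains this bound. By the bipolar theorem `z₀` lies in the closure of the cone of moments
`{Φμ}`, so the bound is the infimum of the primal problem, while `p` is the unique minimizer of
the dual one.
-/

open MeasureTheory

/-- `Φ μ = ∫ φ dμ` for a finite nonnegative Borel measure `μ`. -/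
noncomputable def posPhi {Ω : Type*} [MeasurableSpace Ω] {ι : Type*} [Fintype ι]
    (φ : Ω → EuclideanSpace ℝ ι) (μ : Measure Ω) : EuclideanSpace ℝ ι :=
  ∫ x, φ x ∂μ

open scoped RealInnerProductSpace

section InnerProductSpace

variable {E : Type*} [NormedAddCommGroup E] [InnerProductSpace ℝ E]

theorem norm_sq_sub_norm_add_sq_le_norm_sub_sq {q z : E} (y : E) (h : 0 ≤ ⟪q, z⟫) :
    ‖y‖ ^ 2 - ‖q + y‖ ^ 2 ≤ ‖z - y‖ ^ 2 := by
  have hzqy : 0 ≤ ‖z - (q + y)‖ ^ 2 := sq_nonneg _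
  rw [norm_sub_sq_real, inner_add_right, real_inner_comm] at hzqy
  rw [norm_sub_sq_real]
  linarith

theorem norm_add_sq_add_norm_sub_sq_le {p q y : E} (horth : ⟪p + y, p⟫ = 0)
    (hq : 0 ≤ ⟪q, p + y⟫) : ‖p + y‖ ^ 2 + ‖q - p‖ ^ 2 ≤ ‖q + y‖ ^ 2 := by
  have hsplit := norm_add_sq_real (p + y) (q - p)
  rw [inner_sub_right, horth, real_inner_comm, show p + y + (q - p) = q + y by abel] at hsplit
  linarith

/-- Moreau decomposition of `-y` along a closed convex cone and its inner dual. -/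
theorem ProperCone.exists_add_mem_innerDual_inner_eq_zero [CompleteSpace E]
    (K : ProperCone ℝ E) (y : E) :
    ∃ p ∈ K, p + y ∈ ProperCone.innerDual (K : Set E) ∧ ⟪p + y, p⟫ = 0 := by
  obtain ⟨p, hpK, hp⟩ := exists_norm_eq_iInf_of_complete_convex ⟨0, K.zero_mem⟩
    K.isClosed.isComplete K.convex (-y)
  have hvar := (norm_eq_iInf_iff_real_inner_le_zero K.convex hpK).1 hp
  have hinner_ge : ∀ w ∈ K, ⟪p + y, p⟫ ≤ ⟪p + y, w⟫ := by
    intro w hw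
    have := hvar w hw
    rw [show -y - p = -(p + y) by abel, inner_neg_left, inner_sub_right] at this
    linarith
  -- testing the variational inequality at `0` and `2 • p` gives both signs of `⟪p + y, p⟫`
  have h0 := hinner_ge 0 K.zero_mem
  have h2p := hinner_ge (2 • p) (K.smul_mem hpK two_pos.le)
  rw [inner_zero_right] at h0
  rw [inner_smul_right_eq_smul, two_smul] at h2p
  have horth : ⟪p + y, p⟫ = 0 := by linarith
  refine ⟨p, hpK, ProperCone.mem_innerDual.2 fun w hw ↦ ?_, horth⟩
  rw [real_inner_comm, ← horth]
  exact hinner_ge w hw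

end InnerProductSpace

section IntegralCone

variable {Ω E : Type*} [TopologicalSpace Ω] [CompactSpace Ω] [MeasurableSpace Ω]
  [OpensMeasurableSpace Ω] [NormedAddCommGroup E] {φ : Ω → E}

theorem Continuous.integrable_of_compactSpace (hφ : Continuous φ) (μ : Measure Ω)
    [IsFiniteMeasure μ] : Integrable φ μ :=
  hφ.integrable_of_hasCompactSupport (HasCompactSupport.of_compactSpace φ)

variable [NormedSpace ℝ E]

noncomputable def integralCone (φ : Ω → E) (hφ : Continuous φ) : PointedCone ℝ E where
  carrier := {z | ∃ μ : Measure Ω, IsFiniteMeasure μ ∧ z = ∫ x, φ x ∂μ}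
  zero_mem' := ⟨0, inferInstance, (integral_zero_measure φ).symm⟩
  add_mem' := by
    rintro _ _ ⟨μ, hμ, rfl⟩ ⟨ν, hν, rfl⟩
    exact ⟨μ + ν, inferInstance, (integral_add_measure (hφ.integrable_of_compactSpace μ)
      (hφ.integrable_of_compactSpace ν)).symm⟩
  smul_mem' := by
    rintro c _ ⟨μ, hμ, rfl⟩
    refine ⟨(c : ℝ).toNNReal • μ, inferInstance, ?_⟩
    rw [integral_smul_nnreal_measure, NNReal.smul_def, Real.coe_toNNReal _ c.2]
    rfl

theorem range_subset_integralCone [CompleteSpace E] [MeasurableSingletonClass Ω]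
    (hφ : Continuous φ) : Set.range φ ⊆ integralCone φ hφ := by
  rintro _ ⟨x, rfl⟩
  exact ⟨Measure.dirac x, inferInstance, (integral_dirac φ x).symm⟩

end IntegralCone

section InnerDual

variable {Ω E : Type*} [TopologicalSpace Ω] [CompactSpace Ω] [MeasurableSpace Ω]
  [OpensMeasurableSpace Ω] [MeasurableSingletonClass Ω] [NormedAddCommGroup E]
  [InnerProductSpace ℝ E] [CompleteSpace E] {φ : Ω → E}

theorem closure_integralCone (hφ : Continuous φ) :
    closure (integralCone φ hφ : Set E) =
      ProperCone.innerDual (ProperCone.innerDual (Set.range φ) : Set E) := by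
  apply subset_antisymm
  · refine (ProperCone.innerDual _).isClosed.closure_subset_iff.2 ?_
    rintro _ ⟨μ, hμ, rfl⟩
    refine ProperCone.mem_innerDual.2 fun p hp ↦ ?_
    rw [← integral_inner (hφ.integrable_of_compactSpace μ)]
    exact integral_nonneg fun x ↦ real_inner_comm (φ x) p ▸ hp ⟨x, rfl⟩
  · let C : ProperCone ℝ E := Submodule.closure (integralCone φ hφ)
    have hC : (C : Set E) = closure (integralCone φ hφ) := rfl
    rw [← hC, ← ProperCone.innerDual_innerDual C]
    exact ProperCone.innerDual_le_innerDual <| ProperCone.innerDual_le_innerDual <|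
      (range_subset_integralCone hφ).trans subset_closure

theorem isGLB_half_norm_integral_sub_sq (hφ : Continuous φ) {p y : E}
    (hp : p ∈ ProperCone.innerDual (Set.range φ))
    (hpy : p + y ∈ ProperCone.innerDual (ProperCone.innerDual (Set.range φ) : Set E))
    (horth : ⟪p + y, p⟫ = 0) :
    IsGLB {c : ℝ | ∃ μ : Measure Ω, IsFiniteMeasure μ ∧ c = (1 / 2) * ‖∫ x, φ x ∂μ - y‖ ^ 2}
      (-(1 / 2) * ‖p + y‖ ^ 2 + (1 / 2) * ‖y‖ ^ 2) := by
  have himage : {c : ℝ | ∃ μ : Measure Ω, IsFiniteMeasure μ ∧ c = (1 / 2) * ‖∫ x, φ x ∂μ - y‖ ^ 2}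
      = (fun z ↦ (1 / 2) * ‖z - y‖ ^ 2) '' integralCone φ hφ := by
    ext c
    constructor
    · rintro ⟨μ, hμ, rfl⟩
      exact ⟨_, ⟨μ, hμ, rfl⟩, rfl⟩
    · rintro ⟨_, ⟨μ, hμ, rfl⟩, rfl⟩
      exact ⟨μ, hμ, rfl⟩
  have hclosure := closure_integralCone hφ
  rw [himage]
  have hf : Continuous fun z : E ↦ (1 / 2) * ‖z - y‖ ^ 2 := by fun_prop
  refine isGLB_of_mem_closure (Set.forall_mem_image.2 fun z hz ↦ ?_) ?_
  · have hpz : 0 ≤ ⟪p, z⟫ := ProperCone.mem_innerDual.1 (hclosure.subset (subset_closure hz)) hp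
    linarith [norm_sq_sub_norm_add_sq_le_norm_sub_sq y hpz]
  · have hy := norm_sub_sq_real (p + y) p
    rw [horth, add_sub_cancel_left] at hy
    have hvalue : (1 / 2) * ‖(p + y) - y‖ ^ 2 = -(1 / 2) * ‖p + y‖ ^ 2 + (1 / 2) * ‖y‖ ^ 2 := by
      rw [add_sub_cancel_right]
      linarith
    exact hvalue ▸ image_closure_subset_closure_image hf
      (Set.mem_image_of_mem _ (hclosure.symm.subset hpy))

end InnerDual

/-- Strong duality for positivity-constrained regression:
`inf {(1/2)‖Φμ − y‖² : μ ≥ 0 finite} = sup {−(1/2)‖p+y‖² + (1/2)‖y‖² : p ∈ K}`,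
where `K = {p : ⟨φ(x), p⟩ ≥ 0 ∀x}`, and the supremum is attained at the unique point of
`K` minimizing `‖p + y‖₂`. -/
theorem pos_constrained_strong_duality {Ω : Type*} [MetricSpace Ω] [CompactSpace Ω]
    [MeasurableSpace Ω] [BorelSpace Ω] {n : ℕ}
    (φ : Ω → EuclideanSpace ℝ (Fin n)) (hφ : Continuous φ)
    (y : EuclideanSpace ℝ (Fin n))
    (K : Set (EuclideanSpace ℝ (Fin n)))
    (hK : K = {p | ∀ x : Ω, 0 ≤ (inner ℝ (φ x) p : ℝ)}) :
    sInf {c : ℝ | ∃ μ : Measure Ω, IsFiniteMeasure μ ∧ c = (1 / 2) * ‖posPhi φ μ - y‖ ^ 2} =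
        sSup {c : ℝ | ∃ p ∈ K, c = -(1 / 2) * ‖p + y‖ ^ 2 + (1 / 2) * ‖y‖ ^ 2} ∧
      ∃ p ∈ K, (∀ q ∈ K, ‖p + y‖ ≤ ‖q + y‖) ∧
        (∀ p' ∈ K, (∀ q ∈ K, ‖p' + y‖ ≤ ‖q + y‖) → p' = p) ∧
        sSup {c : ℝ | ∃ p' ∈ K, c = -(1 / 2) * ‖p' + y‖ ^ 2 + (1 / 2) * ‖y‖ ^ 2} =
          -(1 / 2) * ‖p + y‖ ^ 2 + (1 / 2) * ‖y‖ ^ 2 := by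
  set C := ProperCone.innerDual (Set.range φ)
  obtain rfl : K = C := by
    rw [hK]; ext p; simp [C]
  obtain ⟨p, hpK, hpy, horth⟩ := C.exists_add_mem_innerDual_inner_eq_zero y
  have hgap (q) (hq : q ∈ C) : ‖p + y‖ ^ 2 + ‖q - p‖ ^ 2 ≤ ‖q + y‖ ^ 2 :=
    norm_add_sq_add_norm_sub_sq_le horth (ProperCone.mem_innerDual.1 hpy hq)
  have hdual : IsGreatest {c : ℝ | ∃ p' ∈ (C : Set (EuclideanSpace ℝ (Fin n))),
      c = -(1 / 2) * ‖p' + y‖ ^ 2 + (1 / 2) * ‖y‖ ^ 2}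
      (-(1 / 2) * ‖p + y‖ ^ 2 + (1 / 2) * ‖y‖ ^ 2) :=
    ⟨⟨p, hpK, rfl⟩, by rintro _ ⟨q, hq, rfl⟩; linarith [hgap q hq, sq_nonneg ‖q - p‖]⟩
  have hprimal := isGLB_half_norm_integral_sub_sq hφ hpK hpy horth
  refine ⟨(hprimal.csInf_eq ⟨_, 0, inferInstance, rfl⟩).trans hdual.csSup_eq.symm, p, hpK,
    fun q hq ↦ le_of_sq_le_sq (by linarith [hgap q hq, sq_nonneg ‖q - p‖]) (norm_nonneg _),
    fun p' hp' hp'min ↦ ?_, hdual.csSup_eq⟩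
  rw [← sub_eq_zero, ← norm_eq_zero]
  nlinarith [hgap p' hp', hp'min p hpK, norm_nonneg (p' + y), norm_nonneg (p + y),
    norm_nonneg (p' - p)]
end

section
/- Let Ω be a compact metric space, φ : Ω → ℝ^n continuous, and y ∈ ℝ^n. Suppose m is a finite nonnegative Borel measure minimizing E(μ) := (1/2)‖Φμ − y‖₂² over all finite nonnegative Borel measures on Ω, and suppose p ∈ K minimizes ‖p + y‖₂ over K. Then p = Φm − y, and m({x ∈ Ω : ⟨φ(x), p⟩ ≠ 0}) = 0; that is, the support of m is contained in the set {x ∈ Ω : ⟨φ(x), p⟩ = 0} where the dual certificate Φ*p vanishes. (This is part (ii) of Lemma 7.1 of the paper.) -/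
/-! Perturbing `m` by a small Dirac mass and rescaling it give the first-order conditions
`r := Φm - y ∈ K` and `⟪Φm, r⟫ = 0`. For `q ∈ K` we have `⟪Φm, q⟫ = ∫ ⟪φ, q⟫ dm ≥ 0`, so
`q + y = Φm + (q - r)` yields `‖q + y‖² ≥ ‖Φm‖² + ‖q - r‖² = ‖r + y‖² + ‖q - r‖²`: `r` is the unique
dual minimizer and `p = r`. Finally `∫ ⟪φ, p⟫ dm = ⟪Φm, r⟫ = 0` with a nonnegative integrand. -/

open MeasureTheory

open Filter Topology
open scoped RealInnerProductSpace

section InnerProductSpace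

variable {E : Type*} [NormedAddCommGroup E] [InnerProductSpace ℝ E]

theorem real_inner_nonneg_of_eventually_norm_le_norm_add_smul {r v : E}
    (h : ∀ᶠ t in 𝓝[>] (0 : ℝ), ‖r‖ ≤ ‖r + t • v‖) : 0 ≤ ⟪r, v⟫ := by
  have hquot : ∀ᶠ t in 𝓝[>] (0 : ℝ), 0 ≤ 2 * ⟪r, v⟫ + t * ‖v‖ ^ 2 := by
    filter_upwards [h, self_mem_nhdsWithin] with t ht (htpos : 0 < t)
    have hsq : ‖r‖ ^ 2 ≤ ‖r + t • v‖ ^ 2 := by gcongr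
    rw [norm_add_sq_real, real_inner_smul_right, norm_smul, Real.norm_of_nonneg htpos.le] at hsq
    nlinarith
  have hlim : Tendsto (fun t : ℝ => 2 * ⟪r, v⟫ + t * ‖v‖ ^ 2) (𝓝[>] 0)
      (𝓝 (2 * ⟪r, v⟫)) := by
    have : Continuous fun t : ℝ => 2 * ⟪r, v⟫ + t * ‖v‖ ^ 2 := by fun_prop
    simpa using (this.tendsto 0).mono_left nhdsWithin_le_nhds
  linarith [ge_of_tendsto hlim hquot]

theorem eq_zero_of_norm_add_le_of_real_inner_nonneg {a d : E} (hinner : 0 ≤ ⟪a, d⟫)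
    (hle : ‖a + d‖ ≤ ‖a‖) : d = 0 := by
  have hsq : ‖a + d‖ ^ 2 ≤ ‖a‖ ^ 2 := by gcongr
  rw [norm_add_sq_real] at hsq
  exact norm_eq_zero.1 (by nlinarith [norm_nonneg d])

end InnerProductSpace

open scoped NNReal ENNReal

section PosPhi

variable {Ω : Type*} [MeasurableSpace Ω] {ι : Type*} [Fintype ι] {φ : Ω → EuclideanSpace ℝ ι}

theorem posPhi_add {μ ν : Measure Ω} (hμ : Integrable φ μ) (hν : Integrable φ ν) :
    posPhi φ (μ + ν) = posPhi φ μ + posPhi φ ν :=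
  integral_add_measure hμ hν

theorem posPhi_smul (μ : Measure Ω) (c : ℝ≥0) : posPhi φ (c • μ) = (c : ℝ) • posPhi φ μ :=
  integral_smul_measure φ (c : ℝ≥0∞)

theorem posPhi_dirac (hφ : StronglyMeasurable φ) (x : Ω) : posPhi φ (Measure.dirac x) = φ x :=
  integral_dirac' φ x hφ

theorem real_inner_posPhi {μ : Measure Ω} (hφ : Integrable φ μ) (q : EuclideanSpace ℝ ι) :
    ⟪posPhi φ μ, q⟫ = ∫ x, ⟪φ x, q⟫ ∂μ := by
  simp_rw [real_inner_comm q]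
  exact (integral_inner hφ q).symm

variable {m : Measure Ω} [IsFiniteMeasure m] {y : EuclideanSpace ℝ ι}

theorem real_inner_posPhi_residual_eq_zero
    (hm : ∀ μ : Measure Ω, IsFiniteMeasure μ → ‖posPhi φ m - y‖ ≤ ‖posPhi φ μ - y‖) :
    ⟪posPhi φ m, posPhi φ m - y⟫ = 0 := by
  rw [real_inner_comm]
  have hscale : ∀ s : ℝ, 0 ≤ 1 + s →
      ‖posPhi φ m - y‖ ≤ ‖posPhi φ m - y + s • posPhi φ m‖ := by
    intro s hs
    have hΦ : posPhi φ ((1 + s).toNNReal • m) - y = posPhi φ m - y + s • posPhi φ m := by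
      rw [posPhi_smul, Real.coe_toNNReal _ hs, add_smul, one_smul]
      abel
    simpa only [hΦ] using hm ((1 + s).toNNReal • m) inferInstance
  have hup : 0 ≤ ⟪posPhi φ m - y, posPhi φ m⟫ :=
    real_inner_nonneg_of_eventually_norm_le_norm_add_smul
      (eventually_nhdsWithin_of_forall fun t (ht : 0 < t) => hscale t (by linarith))
  have hdown : 0 ≤ ⟪posPhi φ m - y, -posPhi φ m⟫ := by
    refine real_inner_nonneg_of_eventually_norm_le_norm_add_smul ?_
    filter_upwards [Ioo_mem_nhdsGT one_pos] with t ht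
    simpa only [smul_neg, neg_smul] using hscale (-t) (by linarith [ht.2])
  rw [inner_neg_right] at hdown
  linarith

end PosPhi

section CompactSpace

variable {Ω : Type*} [TopologicalSpace Ω] [CompactSpace Ω] [MeasurableSpace Ω]
  [OpensMeasurableSpace Ω]

theorem Continuous.integrable_of_compactSpace_s16 {E : Type*} [NormedAddCommGroup E] {f : Ω → E}
    {μ : Measure Ω} [IsFiniteMeasure μ] (hf : Continuous f) : Integrable f μ :=
  hf.integrable_of_hasCompactSupport (HasCompactSupport.of_compactSpace f)

variable {ι : Type*} [Fintype ι] {φ : Ω → EuclideanSpace ℝ ι} {m : Measure Ω} [IsFiniteMeasure m]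
  {y : EuclideanSpace ℝ ι}

theorem real_inner_residual_nonneg (hφ : Continuous φ)
    (hm : ∀ μ : Measure Ω, IsFiniteMeasure μ → ‖posPhi φ m - y‖ ≤ ‖posPhi φ μ - y‖) (x : Ω) :
    0 ≤ ⟪φ x, posPhi φ m - y⟫ := by
  rw [real_inner_comm]
  refine real_inner_nonneg_of_eventually_norm_le_norm_add_smul
    (eventually_nhdsWithin_of_forall fun t (ht : 0 < t) => ?_)
  have hshift : posPhi φ (m + t.toNNReal • Measure.dirac x) - y = posPhi φ m - y + t • φ x := by
    rw [posPhi_add hφ.integrable_of_compactSpace_s16 hφ.integrable_of_compactSpace_s16, posPhi_smul,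
      posPhi_dirac hφ.stronglyMeasurable, Real.coe_toNNReal t ht.le]
    abel
  simpa only [hshift] using hm (m + t.toNNReal • Measure.dirac x) inferInstance

end CompactSpace

/-- If `m` minimizes `E(μ) = (1/2)‖Φμ − y‖²` over finite nonnegative
Borel measures and `p` minimizes `‖p + y‖₂` over `K = {p : ⟨φ(x), p⟩ ≥ 0 ∀x}`, then
`p = Φm − y` and `m` vanishes on the set where the dual certificate `x ↦ ⟨φ(x), p⟩` is
nonzero. -/
theorem pos_constrained_primal_dual_relation {Ω : Type*} [MetricSpace Ω] [CompactSpace Ω]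
    [MeasurableSpace Ω] [BorelSpace Ω] {n : ℕ}
    (φ : Ω → EuclideanSpace ℝ (Fin n)) (hφ : Continuous φ)
    (y : EuclideanSpace ℝ (Fin n))
    (m : Measure Ω) [IsFiniteMeasure m]
    (hm : ∀ μ : Measure Ω, IsFiniteMeasure μ →
      (1 / 2) * ‖posPhi φ m - y‖ ^ 2 ≤ (1 / 2) * ‖posPhi φ μ - y‖ ^ 2)
    (p : EuclideanSpace ℝ (Fin n))
    (hpK : ∀ x : Ω, 0 ≤ (inner ℝ (φ x) p : ℝ))
    (hpmin : ∀ q : EuclideanSpace ℝ (Fin n), (∀ x : Ω, 0 ≤ (inner ℝ (φ x) q : ℝ)) →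
      ‖p + y‖ ≤ ‖q + y‖) :
    p = posPhi φ m - y ∧ m {x : Ω | (inner ℝ (φ x) p : ℝ) ≠ 0} = 0 := by
  have hmin : ∀ μ : Measure Ω, IsFiniteMeasure μ → ‖posPhi φ m - y‖ ≤ ‖posPhi φ μ - y‖ :=
    fun μ hμ => (pow_le_pow_iff_left₀ (norm_nonneg _) (norm_nonneg _) two_ne_zero).1
      (by linarith [hm μ hμ])
  have horth := real_inner_posPhi_residual_eq_zero hmin
  have hint : Integrable φ m := hφ.integrable_of_compactSpace_s16
  have hΦp : 0 ≤ ⟪posPhi φ m, p⟫ := by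
    rw [real_inner_posPhi hint]
    exact integral_nonneg hpK
  have hpr : p = posPhi φ m - y := by
    refine sub_eq_zero.1 (eq_zero_of_norm_add_le_of_real_inner_nonneg (a := posPhi φ m) ?_ ?_)
    · rwa [inner_sub_right, horth, sub_zero]
    · rw [show posPhi φ m + (p - (posPhi φ m - y)) = p + y by abel]
      simpa only [sub_add_cancel] using hpmin _ (real_inner_residual_nonneg hφ hmin)
  have hint_p : Integrable (fun x => ⟪φ x, p⟫) m :=
    (hφ.inner continuous_const).integrable_of_compactSpace_s16
  refine ⟨hpr, (integral_eq_zero_iff_of_nonneg hpK hint_p).1 ?_⟩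
  rw [← real_inner_posPhi hint, hpr, horth]
end
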